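/- arXiv:1304.3740 — 7 statements merged into one kernel-verified Lean document; each statement's English description precedes it below -/
import Mathlib

section
/- Let R be a commutative noetherian ring and let M be a gauge over R which is of finite type. Then every component M^n is a finitely generated R-module, and M is concentrated in a finite interval, i.e., there exist integers a ≤ b such that v : M^r → M^{r−1} is an isomorphism for all r ≤ a and f : M^r → M^{r+1} is an isomorphism for all r ≥ b. -/
universe u v

/-- A gauge over a commutative ring `R` (for the prime `p`): a family of `R`-modules
`M r` indexed by `ℤ`, with maps `f : M r → M (r+1)` and `v : M (r+1) → M r`
satisfying `f ∘ v = p·id` and `v ∘ f = p·id`. -/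
structure GaugeData (R : Type u) [CommRing R] (p : ℕ) : Type (max u (v + 1)) where
  M : ℤ → Type v
  [acg : ∀ r, AddCommGroup (M r)]
  [mod : ∀ r, Module R (M r)]
  f : ∀ r : ℤ, M r →ₗ[R] M (r + 1)
  v : ∀ r : ℤ, M (r + 1) →ₗ[R] M r
  fv : ∀ (r : ℤ) (x : M (r + 1)), f r (v r x) = (p : R) • x
  vf : ∀ (r : ℤ) (x : M r), v r (f r x) = (p : R) • x

attribute [instance] GaugeData.acg GaugeData.mod

variable {R : Type u} [CommRing R] {p : ℕ}

/-- Transport along an equality of indices. -/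
def GaugeData.cast (G : GaugeData R p) {r s : ℤ} (h : r = s) : G.M r ≃ₗ[R] G.M s := by
  subst h; exact LinearEquiv.refl R (G.M r)

/-- Iterated `f` : `M r → M (r + a)`. -/
def GaugeData.fpow (G : GaugeData R p) : (a : ℕ) → (r : ℤ) → (G.M r →ₗ[R] G.M (r + a))
  | 0, r => (G.cast (by simp)).toLinearMap
  | a + 1, r =>
      (G.cast (show r + 1 + (a : ℕ) = r + ((a + 1 : ℕ) : ℤ) by push_cast; ring)).toLinearMap
        ∘ₗ (G.fpow a (r + 1)) ∘ₗ (G.f r)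

/-- Iterated `v` : `M r → M (r - b)`. -/
def GaugeData.vpow (G : GaugeData R p) : (b : ℕ) → (r : ℤ) → (G.M r →ₗ[R] G.M (r - b))
  | 0, r => (G.cast (by simp)).toLinearMap
  | b + 1, r =>
      (G.cast (show r - 1 - (b : ℕ) = r - ((b + 1 : ℕ) : ℤ) by push_cast; ring)).toLinearMap
        ∘ₗ (G.vpow b (r - 1)) ∘ₗ (G.v (r - 1))
        ∘ₗ (G.cast (show r = r - 1 + 1 by ring)).toLinearMap

/-- The subset of `M n` consisting of all `f^a (m i)` with `n = d i + a` and all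
`v^b (m i)` with `n = d i - b`. -/
def GaugeData.genSet (G : GaugeData R p) {s : ℕ} (d : Fin s → ℤ) (m : ∀ i, G.M (d i))
    (n : ℤ) : Set (G.M n) :=
  {y | ∃ (i : Fin s) (a : ℕ) (h : d i + a = n), y = G.cast h (G.fpow a (d i) (m i))} ∪
    {y | ∃ (i : Fin s) (b : ℕ) (h : d i - b = n), y = G.cast h (G.vpow b (d i) (m i))}

/-- The homogeneous elements `m i` (of degrees `d i`) generate the gauge `G`. -/
def GaugeData.Generates (G : GaugeData R p) {s : ℕ} (d : Fin s → ℤ)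
    (m : ∀ i, G.M (d i)) : Prop :=
  ∀ (n : ℤ) (x : G.M n), x ∈ Submodule.span R (G.genSet d m n)

/-- A gauge is of finite type if finitely many homogeneous elements generate it. -/
def GaugeData.IsFiniteType (G : GaugeData R p) : Prop :=
  ∃ (s : ℕ) (d : Fin s → ℤ) (m : ∀ i, G.M (d i)), G.Generates d m

/-- A gauge is concentrated in the interval `[a, b]` if `v : M r → M (r - 1)` is an
isomorphism for all `r ≤ a` and `f : M r → M (r + 1)` is an isomorphism for all `r ≥ b`. -/
def GaugeData.ConcentratedIn (G : GaugeData R p) (a b : ℤ) : Prop :=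
  (∀ r : ℤ, r + 1 ≤ a → Function.Bijective (G.v r)) ∧
    (∀ r : ℤ, b ≤ r → Function.Bijective (G.f r))

/-!
Above the degrees of all generators, every generator of `M^(r+1)` is an `f`-image, so
`f : M^r → M^(r+1)` is onto; dually `v` is onto in low degrees. Each `M^n` is spanned by the
finitely many images of the generators in degree `n`, hence is finitely generated and so noetherian.
For a degree `D` above the generators the kernels of the surjections `f^k : M^D → M^(D+k)` form
an increasing chain, which stabilises at some `k₀`; then for `k ≥ k₀` an `x = f^k z` with
`f x = 0` has `z ∈ ker f^(k+1) = ker f^k`, so `x = 0`. The same argument with `v` handles low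
degrees.
-/

open Filter Function

theorem eventually_injective_of_isNoetherian {R M : Type*} [Ring R] [AddCommGroup M]
    [Module R M] [IsNoetherian R M] {N : ℕ → Type*} [∀ k, AddCommGroup (N k)]
    [∀ k, Module R (N k)] (φ : ∀ k, M →ₗ[R] N k) (g : ∀ k, N k →ₗ[R] N (k + 1))
    (hφ : Surjective (φ 0)) (hg : ∀ k, Surjective (g k)) (hgφ : ∀ k, g k ∘ₗ φ k = φ (k + 1)) :
    ∀ᶠ k in atTop, Injective (g k) := by
  have hφ_surj : ∀ k, Surjective (φ k) := by
    intro k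
    induction k with
    | zero => exact hφ
    | succ k ih => rw [← hgφ]; exact (hg k).comp ih
  let kernels : ℕ →o Submodule R M :=
    ⟨fun k => LinearMap.ker (φ k), monotone_nat_of_le_succ fun k => by
      rw [← hgφ]; exact LinearMap.ker_le_ker_comp _ _⟩
  obtain ⟨k₀, hk₀⟩ := monotone_stabilizes_iff_noetherian.mpr inferInstance kernels
  refine eventually_atTop.mpr ⟨k₀, fun k hk => (injective_iff_map_eq_zero _).mpr ?_⟩
  intro x hx
  obtain ⟨z, rfl⟩ := hφ_surj k x
  have hz : z ∈ kernels (k + 1) := by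
    change z ∈ LinearMap.ker (φ (k + 1))
    rw [LinearMap.mem_ker, ← hgφ]
    exact hx
  rw [← hk₀ _ (by omega), hk₀ k hk] at hz
  exact hz

namespace GaugeData

variable (G : GaugeData R p)

/- Degrees such as `r + (a + 1)` and `r + a + 1` are only propositionally equal, so iterates
living in different but equal degrees are compared up to `HEq`. -/

lemma cast_heq {r s : ℤ} (h : r = s) (x : G.M r) : G.cast h x ≍ x := by
  subst h; rfl

lemma f_congr_heq {r s : ℤ} (h : r = s) {x : G.M r} {y : G.M s} (hxy : x ≍ y) :
    G.f r x ≍ G.f s y := by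
  subst h; rw [eq_of_heq hxy]

lemma v_congr_heq {r s : ℤ} (h : r = s) {x : G.M (r + 1)} {y : G.M (s + 1)} (hxy : x ≍ y) :
    G.v r x ≍ G.v s y := by
  subst h; rw [eq_of_heq hxy]

lemma fpow_succ_heq (a : ℕ) (r : ℤ) (x : G.M r) :
    G.fpow (a + 1) r x ≍ G.f (r + a) (G.fpow a r x) := by
  induction a generalizing r with
  | zero =>
    exact (G.cast_heq _ _).trans <| (G.cast_heq _ _).trans <|
      G.f_congr_heq (by simp) (G.cast_heq _ _).symm
  | succ a ih =>
    exact (G.cast_heq _ _).trans <| (ih (r + 1) _).trans <|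
      G.f_congr_heq (by push_cast; ring) (G.cast_heq _ _).symm

lemma vpow_succ_heq (b : ℕ) (r : ℤ) (x : G.M r) :
    G.vpow (b + 1) r x ≍ G.v (r - b - 1) (G.cast (by omega) (G.vpow b r x)) := by
  induction b generalizing r with
  | zero =>
    exact (G.cast_heq _ _).trans <| (G.cast_heq _ _).trans <| G.v_congr_heq (by simp) <|
      (G.cast_heq _ _).trans ((G.cast_heq _ _).trans (G.cast_heq _ _)).symm
  | succ b ih =>
    exact (G.cast_heq _ _).trans <| (ih (r - 1) _).trans <| G.v_congr_heq (by push_cast; ring) <|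
      (G.cast_heq _ _).trans ((G.cast_heq _ _).trans (G.cast_heq _ _)).symm

section Generation

variable {G} {s : ℕ} {d : Fin s → ℤ} {m : ∀ i, G.M (d i)}

lemma genSet_finite (n : ℤ) : (G.genSet d m n).Finite := by
  refine .union ?_ ?_ <;> rw [Set.ofPred_exists] <;>
    refine Set.finite_iUnion fun i => Set.Subsingleton.finite ?_
  · rintro _ ⟨a, h, rfl⟩ _ ⟨a', h', rfl⟩
    obtain rfl : a = a' := by omega
    rfl
  · rintro _ ⟨b, h, rfl⟩ _ ⟨b', h', rfl⟩
    obtain rfl : b = b' := by omega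
    rfl

lemma module_finite_of_generates (hgen : G.Generates d m) (n : ℤ) : Module.Finite R (G.M n) :=
  ⟨Submodule.fg_def.mpr ⟨_, genSet_finite n, eq_top_iff.mpr fun x _ => hgen n x⟩⟩

lemma surjective_f_of_generates (hgen : G.Generates d m) {r : ℤ} (hr : ∀ i, d i ≤ r) :
    Surjective (G.f r) := by
  refine LinearMap.range_eq_top.mp (eq_top_iff.mpr fun y _ => Submodule.span_le.mpr ?_ (hgen _ y))
  rintro _ (⟨i, _ | a, h, rfl⟩ | ⟨i, b, h, rfl⟩)
  · have := hr i; omega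
  · obtain rfl : d i + a = r := by push_cast at h; omega
    exact ⟨_, eq_of_heq ((G.fpow_succ_heq a _ _).symm.trans (G.cast_heq _ _).symm)⟩
  · have := hr i; omega

lemma surjective_v_of_generates (hgen : G.Generates d m) {r : ℤ} (hr : ∀ i, r + 1 ≤ d i) :
    Surjective (G.v r) := by
  refine LinearMap.range_eq_top.mp (eq_top_iff.mpr fun y _ => Submodule.span_le.mpr ?_ (hgen _ y))
  rintro _ (⟨i, a, h, rfl⟩ | ⟨i, _ | b, h, rfl⟩)
  · have := hr i; omega
  · have := hr i; omega
  · obtain rfl : d i - b - 1 = r := by push_cast at h; omega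
    exact ⟨_, eq_of_heq ((G.vpow_succ_heq b _ _).symm.trans (G.cast_heq _ _).symm)⟩

variable [IsNoetherianRing R]

lemma eventually_bijective_f (hgen : G.Generates d m) : ∀ᶠ r in atTop, Bijective (G.f r) := by
  obtain ⟨D, hD⟩ := (Set.finite_range d).bddAbove
  have hsurj : ∀ r, D ≤ r → Surjective (G.f r) := fun r hr =>
    surjective_f_of_generates hgen fun i => (hD ⟨i, rfl⟩).trans hr
  have := module_finite_of_generates hgen D
  obtain ⟨k₀, hk₀⟩ := eventually_atTop.mp <| eventually_injective_of_isNoetherian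
    (fun k => G.fpow k D) (fun k => (G.cast (by push_cast; ring)).toLinearMap ∘ₗ G.f (D + k))
    (G.cast _).surjective (fun k => (G.cast _).surjective.comp (hsurj _ (by omega)))
    (fun k => LinearMap.ext fun x =>
      eq_of_heq ((G.cast_heq _ _).trans (G.fpow_succ_heq k D x).symm))
  refine eventually_atTop.mpr ⟨D + k₀, fun r hr => ?_⟩
  obtain ⟨k, rfl⟩ : ∃ k : ℕ, r = D + k := ⟨(r - D).toNat, by omega⟩
  exact ⟨(hk₀ k (by omega)).of_comp (f := G.cast _), hsurj _ (by omega)⟩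

lemma eventually_bijective_v (hgen : G.Generates d m) : ∀ᶠ r in atBot, Bijective (G.v r) := by
  obtain ⟨E, hE⟩ := (Set.finite_range d).bddBelow
  have hsurj : ∀ r, r + 1 ≤ E → Surjective (G.v r) := fun r hr =>
    surjective_v_of_generates hgen fun i => hr.trans (hE ⟨i, rfl⟩)
  have := module_finite_of_generates hgen E
  obtain ⟨k₀, hk₀⟩ := eventually_atTop.mp <| eventually_injective_of_isNoetherian
    (fun k => G.vpow k E)
    (fun k => (G.cast (by push_cast; ring)).toLinearMap ∘ₗ G.v (E - k - 1) ∘ₗ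
      (G.cast (by ring)).toLinearMap)
    (G.cast _).surjective
    (fun k => (G.cast _).surjective.comp ((hsurj _ (by omega)).comp (G.cast _).surjective))
    (fun k => LinearMap.ext fun x =>
      eq_of_heq ((G.cast_heq _ _).trans (G.vpow_succ_heq k E x).symm))
  refine eventually_atBot.mpr ⟨E - k₀ - 1, fun r hr => ?_⟩
  obtain ⟨k, rfl⟩ : ∃ k : ℕ, r = E - k - 1 := ⟨(E - 1 - r).toNat, by omega⟩
  exact ⟨Injective.of_comp_right (g := G.cast _) ((hk₀ k (by omega)).of_comp (f := G.cast _))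
    (G.cast _).surjective, hsurj _ (by omega)⟩

end Generation

end GaugeData

theorem gauge_finiteType_tfae_general (p : ℕ) {R : Type u} [CommRing R]
    [IsNoetherianRing R] (G : GaugeData R p) (hft : G.IsFiniteType) :
    (∀ n : ℤ, Module.Finite R (G.M n)) ∧ ∃ a b : ℤ, a ≤ b ∧ G.ConcentratedIn a b := by
  obtain ⟨s, d, m, hgen⟩ := hft
  obtain ⟨a, ha⟩ := eventually_atBot.mp (G.eventually_bijective_v hgen)
  obtain ⟨b, hb⟩ := eventually_atTop.mp (G.eventually_bijective_f hgen)
  exact ⟨GaugeData.module_finite_of_generates hgen, min (a + 1) b, b, min_le_right _ _,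
    fun r hr => ha r (by omega), hb⟩

theorem gauge_finiteType_tfae (p : ℕ) (hp : p.Prime) {R : Type u} [CommRing R]
    [IsNoetherianRing R] (G : GaugeData R p) (hft : G.IsFiniteType) :
    (∀ n : ℤ, Module.Finite R (G.M n)) ∧ ∃ a b : ℤ, a ≤ b ∧ G.ConcentratedIn a b :=
  gauge_finiteType_tfae_general p G hft
end

section
/- Let (D, ϕ, M) and (D', ϕ', M') be virtual crystals over k and let g : M → M' be a W-linear map, with ĝ : D → D' its unique B-linear extension. Then the following are equivalent: (i) ĝ∘ϕ = ϕ'∘ĝ; (ii) g(M^r) ⊆ M'^r for every r ∈ ℤ, and for every r and every x ∈ M^r one has ϕ'(g(x)) = p^r·g(φ_r(x)), where φ_r(x) is the unique element of M with ϕ(x) = p^r·φ_r(x). Consequently the construction of theorem 2.2.1 is fully faithful: restriction gives a bijection between morphisms of virtual crystals (W-linear maps M → M' whose B-linear extension intertwines ϕ and ϕ') and morphisms of the associated φ-gauges. -/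
open Pointwise

universe u v

variable {R : Type u} [CommRing R] {p : ℕ}

section Crystal

variable (p) [hp : Fact p.Prime] (k : Type) [Field k] [CharP k p] [PerfectRing k p]

variable (D : Type) [AddCommGroup D] [Module (FractionRing (WittVector p k)) D]
  [Module (WittVector p k) D] [IsScalarTower (WittVector p k) (FractionRing (WittVector p k)) D]
  (ϕ : D → D) (M : Submodule (WittVector p k) D)

/-- The degree-`r` component `M^r = {m ∈ M : ϕ(m) ∈ pʳ·M}` of the gauge associated to a
virtual crystal `(D, ϕ, M)`. -/
def crystalComponentSet (r : ℤ) : Set D :=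
  {x | x ∈ M ∧ ϕ x ∈ (p : FractionRing (WittVector p k)) ^ r • (M : Set D)}

/-- `M^r` as a `W(k)`-submodule of `D` (given that `ϕ` is additive and `σ`-semilinear,
where `σB` is induced by the Witt-vector Frobenius). -/
def crystalComponent
    (σB : FractionRing (WittVector p k) ≃+* FractionRing (WittVector p k))
    (hσB : ∀ w : WittVector p k,
      σB (algebraMap (WittVector p k) (FractionRing (WittVector p k)) w) =
        algebraMap (WittVector p k) (FractionRing (WittVector p k))
          (WittVector.frobeniusEquiv p k w))
    (hadd : ∀ x y : D, ϕ (x + y) = ϕ x + ϕ y)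
    (hsemi : ∀ (c : FractionRing (WittVector p k)) (x : D), ϕ (c • x) = σB c • ϕ x)
    (r : ℤ) : Submodule (WittVector p k) D where
  carrier := crystalComponentSet p k D ϕ M r
  add_mem' := by
    rintro x y ⟨hxM, hx⟩ ⟨hyM, hy⟩
    obtain ⟨m1, hm1, hx⟩ := Set.mem_smul_set.mp hx
    obtain ⟨m2, hm2, hy⟩ := Set.mem_smul_set.mp hy
    exact ⟨M.add_mem hxM hyM, Set.mem_smul_set.mpr
      ⟨m1 + m2, M.add_mem hm1 hm2, by rw [smul_add, hx, hy, hadd]⟩⟩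
  zero_mem' := by
    have h0 : ϕ 0 = 0 := by
      have h := hadd 0 0
      rw [add_zero] at h
      exact (left_eq_add.mp h)
    exact ⟨M.zero_mem, Set.mem_smul_set.mpr ⟨0, M.zero_mem, by rw [smul_zero, h0]⟩⟩
  smul_mem' := by
    rintro c x ⟨hxM, hx⟩
    obtain ⟨m1, hm1, hx⟩ := Set.mem_smul_set.mp hx
    refine ⟨M.smul_mem c hxM, Set.mem_smul_set.mpr
      ⟨(WittVector.frobeniusEquiv p k c) • m1, M.smul_mem _ hm1, ?_⟩⟩
    have h1 : c • x = (algebraMap (WittVector p k) (FractionRing (WittVector p k)) c) • x :=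
      (algebraMap_smul (FractionRing (WittVector p k)) c x).symm
    have h2 : ϕ (c • x) = (p : FractionRing (WittVector p k)) ^ r •
        ((WittVector.frobeniusEquiv p k c) • m1) := by
      rw [h1, hsemi, hσB, ← hx, smul_comm, algebraMap_smul]
    exact h2.symm

/-- The gauge associated to a virtual crystal `(D, ϕ, M)`: the components are the
`M^r = {m ∈ M : ϕ(m) ∈ pʳ·M}`, `f` is multiplication by `p` and `v` is the inclusion. -/
noncomputable def crystalGauge
    (σB : FractionRing (WittVector p k) ≃+* FractionRing (WittVector p k))
    (hσB : ∀ w : WittVector p k,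
      σB (algebraMap (WittVector p k) (FractionRing (WittVector p k)) w) =
        algebraMap (WittVector p k) (FractionRing (WittVector p k))
          (WittVector.frobeniusEquiv p k w))
    (hadd : ∀ x y : D, ϕ (x + y) = ϕ x + ϕ y)
    (hsemi : ∀ (c : FractionRing (WittVector p k)) (x : D), ϕ (c • x) = σB c • ϕ x) :
    GaugeData (WittVector p k) p where
  M r := ↥(crystalComponent p k D ϕ M σB hσB hadd hsemi r)
  f r := LinearMap.codRestrict (crystalComponent p k D ϕ M σB hσB hadd hsemi (r + 1))
    ((p : WittVector p k) • (crystalComponent p k D ϕ M σB hσB hadd hsemi r).subtype)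
    (by
      rintro ⟨x, hxM, hx⟩
      obtain ⟨m1, hm1, hx⟩ := Set.mem_smul_set.mp hx
      simp only [LinearMap.smul_apply, Submodule.subtype_apply]
      have h1 : (p : WittVector p k) • x = ((p : FractionRing (WittVector p k)) • x : D) := by
        rw [← algebraMap_smul (FractionRing (WittVector p k))
          ((p : ℕ) : WittVector p k) x, map_natCast]
      refine ⟨M.smul_mem _ hxM, Set.mem_smul_set.mpr ⟨m1, hm1, ?_⟩⟩
      rw [h1, hsemi, map_natCast, ← hx, smul_smul]
      congr 1
      rw [zpow_add_one₀ (WittVector.FractionRing.p_nonzero p k), mul_comm])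
  v r := LinearMap.codRestrict (crystalComponent p k D ϕ M σB hσB hadd hsemi r)
    ((crystalComponent p k D ϕ M σB hσB hadd hsemi (r + 1)).subtype)
    (by
      rintro ⟨x, hxM, hx⟩
      obtain ⟨m1, hm1, hx⟩ := Set.mem_smul_set.mp hx
      simp only [Submodule.subtype_apply]
      refine ⟨hxM, Set.mem_smul_set.mpr ⟨(p : WittVector p k) • m1, M.smul_mem _ hm1, ?_⟩⟩
      have h1 : (p : WittVector p k) • m1 = ((p : FractionRing (WittVector p k)) • m1 : D) := by
        rw [← algebraMap_smul (FractionRing (WittVector p k))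
          ((p : ℕ) : WittVector p k) m1, map_natCast]
      rw [h1, ← hx, smul_smul]
      congr 1
      rw [zpow_add_one₀ (WittVector.FractionRing.p_nonzero p k)])
  fv := by
    intro r x
    apply Subtype.ext
    simp
  vf := by
    intro r x
    apply Subtype.ext
    simp

end Crystal

/-!
Since `M` spans `D` over `B = Frac W` and `D` is a `B`-vector space, `D` is the localization of
`M` at the nonzero elements of `W`; so `W`-linear maps `M → D'` are the same as `B`-linear maps
`D → D'`. As `W` is a discrete valuation ring with uniformizer `p`, for every `x ∈ D` some
`pⁿ • x` lies in `M`, and `ϕ (pⁿ • x) = p^(-a) • y` with `y ∈ M`. Compatibility with the divided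
Frobenius on `pⁿ • x ∈ M^(-a)` then gives `ĝ (ϕ (pⁿ • x)) = ϕ' (ĝ (pⁿ • x))`, and `pⁿ` cancels
because `σ` fixes `p`.
-/

section Localization

variable {A : Type*} [CommSemiring A] (S : Submonoid A) (K : Type*) [CommSemiring K]
  [Algebra A K] {N N' : Type*} [AddCommMonoid N] [Module A N] [Module K N]
  [IsScalarTower A K N] [AddCommMonoid N'] [Module A N'] [Module K N'] [IsScalarTower A K N']

theorem Submodule.isLocalizedModule_subtype_of_span_eq_top [IsLocalization S K]
    {M : Submodule A N} (hM : Submodule.span K (M : Set N) = ⊤) :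
    IsLocalizedModule S M.subtype where
  map_units := (isLocalizedModule_id S N K).map_units
  surj y := by
    have hy : y ∈ Submodule.span K (M : Set N) := hM ▸ Submodule.mem_top
    induction hy using Submodule.span_induction with
    | mem y hy => exact ⟨(⟨y, hy⟩, 1), one_smul _ _⟩
    | zero => exact ⟨(0, 1), by simp⟩
    | add y z _ _ hy hz =>
      obtain ⟨⟨m, s⟩, hm⟩ := hy
      obtain ⟨⟨n, t⟩, hn⟩ := hz
      refine ⟨(t • m + s • n, s * t), ?_⟩
      simp only [Submonoid.smul_def, Submonoid.coe_mul] at hm hn ⊢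
      rw [smul_add, mul_comm, mul_smul, hm, mul_comm, mul_smul, hn]
      simp
    | smul c y _ hy =>
      obtain ⟨⟨m, s⟩, hm⟩ := hy
      obtain ⟨⟨a, t⟩, rfl⟩ := IsLocalization.mk'_surjective S c
      refine ⟨(a • m, t * s), ?_⟩
      simp only [Submonoid.smul_def, Submonoid.coe_mul] at hm ⊢
      rw [mul_smul, smul_comm (s : A), hm, ← algebraMap_smul K (t : A), smul_smul,
        IsLocalization.mk'_spec', algebraMap_smul]
      simp
  exists_of_eq h := ⟨1, by simpa using Subtype.val_injective h⟩

theorem Submodule.existsUnique_linearMap_extension_of_span_eq_top [IsLocalization S K]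
    {M : Submodule A N} (hM : Submodule.span K (M : Set N) = ⊤) (g₀ : M →ₗ[A] N') :
    ∃! g : N →ₗ[K] N', ∀ x : M, g x = g₀ x := by
  have := Submodule.isLocalizedModule_subtype_of_span_eq_top S K hM
  have hunits := (isLocalizedModule_id S N' K).map_units
  refine ⟨(IsLocalizedModule.lift S M.subtype g₀ hunits).extendScalarsOfIsLocalization S K,
    IsLocalizedModule.lift_apply S M.subtype g₀ hunits, fun g hg ↦ LinearMap.ext_on hM ?_⟩
  intro x hx
  exact (hg ⟨x, hx⟩).trans (IsLocalizedModule.lift_apply S M.subtype g₀ hunits ⟨x, hx⟩).symm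

end Localization

theorem Submodule.exists_pow_smul_mem_of_span_eq_top {A K N : Type*} [CommRing A] [IsDomain A]
    [IsDiscreteValuationRing A] [CommRing K] [Algebra A K] [IsFractionRing A K]
    [AddCommMonoid N] [Module A N] [Module K N] [IsScalarTower A K N] {ϖ : A}
    (hϖ : Irreducible ϖ) {M : Submodule A N} (hM : Submodule.span K (M : Set N) = ⊤) (x : N) :
    ∃ n : ℕ, ϖ ^ n • x ∈ M := by
  have := Submodule.isLocalizedModule_subtype_of_span_eq_top (nonZeroDivisors A) K hM
  obtain ⟨⟨m, s⟩, hs⟩ := IsLocalizedModule.surj (nonZeroDivisors A) M.subtype x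
  obtain ⟨n, u, hu⟩ :=
    IsDiscreteValuationRing.associated_pow_irreducible (nonZeroDivisors.ne_zero s.2) hϖ
  refine ⟨n, ?_⟩
  rw [← hu, mul_comm, mul_smul, ← Submonoid.smul_def, hs]
  exact M.smul_mem _ m.2

theorem LinearMap.apply_comp_eq_of_forall_eq_zpow_smul {K N N' : Type*} [Field K]
    [AddCommGroup N] [Module K N] [AddCommGroup N'] [Module K N'] {π : K} (hπ : π ≠ 0)
    {M : Set N} (hM : ∀ x : N, ∃ n : ℕ, π ^ n • x ∈ M) {ϕ : N → N} {ϕ' : N' → N'}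
    (hϕ : Function.Commute ϕ (π • ·)) (hϕ' : Function.Commute ϕ' (π • ·)) (g : N →ₗ[K] N')
    (hg : ∀ (r : ℤ) (x y : N), x ∈ M → y ∈ M → ϕ x = π ^ r • y → ϕ' (g x) = π ^ r • g y)
    (x : N) : g (ϕ x) = ϕ' (g x) := by
  obtain ⟨n, hn⟩ := hM x
  obtain ⟨a, ha⟩ := hM (ϕ (π ^ n • x))
  have hdivide : ϕ (π ^ n • x) = π ^ (-(a : ℤ)) • π ^ a • ϕ (π ^ n • x) := by
    rw [zpow_neg, zpow_natCast, inv_smul_smul₀ (pow_ne_zero a hπ)]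
  have hcompat := hg _ _ _ hn ha hdivide
  rw [← map_smul, ← hdivide] at hcompat
  have hϕ_pow : ϕ (π ^ n • x) = π ^ n • ϕ x := by
    simpa [smul_iterate] using hϕ.iterate_right n x
  have hϕ'_pow : ϕ' (π ^ n • g x) = π ^ n • ϕ' (g x) := by
    simpa [smul_iterate] using hϕ'.iterate_right n (g x)
  refine smul_right_injective N' (pow_ne_zero n hπ) ?_
  calc π ^ n • g (ϕ x) = g (ϕ (π ^ n • x)) := by rw [hϕ_pow, map_smul]
    _ = ϕ' (g (π ^ n • x)) := hcompat.symm
    _ = π ^ n • ϕ' (g x) := by rw [map_smul, hϕ'_pow]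

theorem crystalComponentSet_mapsTo (p : ℕ) [Fact p.Prime] (k : Type) [Field k] [CharP k p]
    [PerfectRing k p] {D D' : Type} [AddCommGroup D] [Module (FractionRing (WittVector p k)) D]
    [Module (WittVector p k) D] [IsScalarTower (WittVector p k) (FractionRing (WittVector p k)) D]
    [AddCommGroup D'] [Module (FractionRing (WittVector p k)) D'] [Module (WittVector p k) D']
    [IsScalarTower (WittVector p k) (FractionRing (WittVector p k)) D'] {ϕ : D → D}
    {ϕ' : D' → D'} {M : Submodule (WittVector p k) D} {M' : Submodule (WittVector p k) D'}
    (g : D →ₗ[FractionRing (WittVector p k)] D') (hgM : ∀ x ∈ M, g x ∈ M')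
    (hg : ∀ x, g (ϕ x) = ϕ' (g x)) (r : ℤ) :
    Set.MapsTo g (crystalComponentSet p k D ϕ M r) (crystalComponentSet p k D' ϕ' M' r) := by
  rintro x ⟨hxM, y, hyM, hxy⟩
  exact ⟨hgM x hxM, g y, hgM y hyM, by rw [← hg, ← hxy, map_smul]⟩

theorem crystal_functor_fully_faithful_general (p : ℕ) [hp : Fact p.Prime] (k : Type) [Field k]
    [CharP k p] [PerfectRing k p]
    (σB : FractionRing (WittVector p k) ≃+* FractionRing (WittVector p k))
    -- the first virtual crystal (D, ϕ, M)
    (D : Type) [AddCommGroup D]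
    [Module (FractionRing (WittVector p k)) D] [Module (WittVector p k) D]
    [IsScalarTower (WittVector p k) (FractionRing (WittVector p k)) D]
    (ϕ : D → D)
    (hsemi : ∀ (c : FractionRing (WittVector p k)) (x : D), ϕ (c • x) = σB c • ϕ x)
    (M : Submodule (WittVector p k) D)
    (hspan : Submodule.span (FractionRing (WittVector p k)) (M : Set D) = ⊤)
    -- the second virtual crystal (D', ϕ', M')
    (D' : Type) [AddCommGroup D']
    [Module (FractionRing (WittVector p k)) D'] [Module (WittVector p k) D']
    [IsScalarTower (WittVector p k) (FractionRing (WittVector p k)) D']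
    (ϕ' : D' → D')
    (hsemi' : ∀ (c : FractionRing (WittVector p k)) (x : D'), ϕ' (c • x) = σB c • ϕ' x)
    (M' : Submodule (WittVector p k) D') :
    -- (i) ⇔ (ii)
    (∀ g : D →ₗ[FractionRing (WittVector p k)] D', (∀ x ∈ M, g x ∈ M') →
      ((∀ x : D, g (ϕ x) = ϕ' (g x)) ↔
        ((∀ (r : ℤ) (x : D), x ∈ crystalComponentSet p k D ϕ M r →
            g x ∈ crystalComponentSet p k D' ϕ' M' r) ∧
          (∀ (r : ℤ) (x y : D), x ∈ crystalComponentSet p k D ϕ M r → y ∈ M →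
            ϕ x = (p : FractionRing (WittVector p k)) ^ r • y →
            ϕ' (g x) = (p : FractionRing (WittVector p k)) ^ r • g y)))) ∧
    -- fullness: every morphism of the associated φ-gauges comes from a unique morphism of
    -- virtual crystals
    (∀ g₀ : ↥M →ₗ[WittVector p k] D', (∀ x : ↥M, g₀ x ∈ M') →
      (∀ (r : ℤ) (x : ↥M), (x : D) ∈ crystalComponentSet p k D ϕ M r →
        g₀ x ∈ crystalComponentSet p k D' ϕ' M' r) →
      (∀ (r : ℤ) (x y : ↥M), (x : D) ∈ crystalComponentSet p k D ϕ M r →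
        ϕ (x : D) = (p : FractionRing (WittVector p k)) ^ r • (y : D) →
        ϕ' (g₀ x) = (p : FractionRing (WittVector p k)) ^ r • g₀ y) →
      ∃! g : D →ₗ[FractionRing (WittVector p k)] D',
        (∀ x : ↥M, g (x : D) = g₀ x) ∧ (∀ x : D, g (ϕ x) = ϕ' (g x))) := by
  have hp0 : (p : FractionRing (WittVector p k)) ≠ 0 := WittVector.FractionRing.p_nonzero p k
  have hpM (x : D) : ∃ n : ℕ, (p : FractionRing (WittVector p k)) ^ n • x ∈ M := by
    obtain ⟨n, hn⟩ :=
      Submodule.exists_pow_smul_mem_of_span_eq_top (WittVector.irreducible p) hspan x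
    refine ⟨n, ?_⟩
    rwa [← map_natCast (algebraMap (WittVector p k) _), ← map_pow, algebraMap_smul]
  have intertwines (g : D →ₗ[FractionRing (WittVector p k)] D')
      (hg : ∀ (r : ℤ) (x y : D), x ∈ M → y ∈ M →
        ϕ x = (p : FractionRing (WittVector p k)) ^ r • y →
        ϕ' (g x) = (p : FractionRing (WittVector p k)) ^ r • g y) (x : D) :
      g (ϕ x) = ϕ' (g x) :=
    LinearMap.apply_comp_eq_of_forall_eq_zpow_smul hp0 hpM (fun x ↦ by rw [hsemi, map_natCast])
      (fun x ↦ by rw [hsemi', map_natCast]) g hg x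
  constructor
  · intro g hgM
    refine ⟨fun hg ↦ ⟨crystalComponentSet_mapsTo p k g hgM hg, fun r x y _ _ hxy ↦ ?_⟩,
      fun ⟨_, hg⟩ ↦ ?_⟩
    · rw [← hg, hxy, map_smul]
    · exact intertwines g fun r x y hx hy hxy ↦ hg r x y ⟨hx, y, hy, hxy.symm⟩ hy hxy
  · intro g₀ _ _ hg₀
    obtain ⟨g, hg, huniq⟩ := Submodule.existsUnique_linearMap_extension_of_span_eq_top
      (nonZeroDivisors (WittVector p k)) (FractionRing (WittVector p k)) hspan g₀
    refine ⟨g, ⟨hg, intertwines g fun r x y hx hy hxy ↦ ?_⟩, fun g' hg' ↦ huniq g' hg'.1⟩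
    rw [hg ⟨x, hx⟩, hg ⟨y, hy⟩]
    exact hg₀ r ⟨x, hx⟩ ⟨y, hy⟩ ⟨hx, y, hy, hxy.symm⟩ hxy

/-- Full faithfulness of the functor from virtual crystals to φ-gauges: for a `W(k)`-linear
map `g : M → M'` with (unique) `B`-linear extension `ĝ : D → D'`, `ĝ` intertwines `ϕ` and
`ϕ'` iff `g` maps `M^r` into `M'^r` for all `r` and commutes with the divided Frobenii; and
every morphism of the associated φ-gauges arises from a unique such `ĝ`. -/
theorem crystal_functor_fully_faithful (p : ℕ) [hp : Fact p.Prime] (k : Type) [Field k]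
    [CharP k p] [PerfectRing k p]
    (σB : FractionRing (WittVector p k) ≃+* FractionRing (WittVector p k))
    (hσB : ∀ w : WittVector p k,
      σB (algebraMap (WittVector p k) (FractionRing (WittVector p k)) w) =
        algebraMap (WittVector p k) (FractionRing (WittVector p k))
          (WittVector.frobeniusEquiv p k w))
    -- the first virtual crystal (D, ϕ, M)
    (D : Type) [AddCommGroup D]
    [Module (FractionRing (WittVector p k)) D] [Module (WittVector p k) D]
    [IsScalarTower (WittVector p k) (FractionRing (WittVector p k)) D]
    [Module.Finite (FractionRing (WittVector p k)) D]
    (ϕ : D → D) (hadd : ∀ x y : D, ϕ (x + y) = ϕ x + ϕ y) (hbij : Function.Bijective ϕ)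
    (hsemi : ∀ (c : FractionRing (WittVector p k)) (x : D), ϕ (c • x) = σB c • ϕ x)
    (M : Submodule (WittVector p k) D) (hfg : M.FG)
    (hspan : Submodule.span (FractionRing (WittVector p k)) (M : Set D) = ⊤)
    -- the second virtual crystal (D', ϕ', M')
    (D' : Type) [AddCommGroup D']
    [Module (FractionRing (WittVector p k)) D'] [Module (WittVector p k) D']
    [IsScalarTower (WittVector p k) (FractionRing (WittVector p k)) D']
    [Module.Finite (FractionRing (WittVector p k)) D']
    (ϕ' : D' → D') (hadd' : ∀ x y : D', ϕ' (x + y) = ϕ' x + ϕ' y)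
    (hbij' : Function.Bijective ϕ')
    (hsemi' : ∀ (c : FractionRing (WittVector p k)) (x : D'), ϕ' (c • x) = σB c • ϕ' x)
    (M' : Submodule (WittVector p k) D') (hfg' : M'.FG)
    (hspan' : Submodule.span (FractionRing (WittVector p k)) (M' : Set D') = ⊤) :
    -- (i) ⇔ (ii)
    (∀ g : D →ₗ[FractionRing (WittVector p k)] D', (∀ x ∈ M, g x ∈ M') →
      ((∀ x : D, g (ϕ x) = ϕ' (g x)) ↔
        ((∀ (r : ℤ) (x : D), x ∈ crystalComponentSet p k D ϕ M r →
            g x ∈ crystalComponentSet p k D' ϕ' M' r) ∧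
          (∀ (r : ℤ) (x y : D), x ∈ crystalComponentSet p k D ϕ M r → y ∈ M →
            ϕ x = (p : FractionRing (WittVector p k)) ^ r • y →
            ϕ' (g x) = (p : FractionRing (WittVector p k)) ^ r • g y)))) ∧
    -- fullness: every morphism of the associated φ-gauges comes from a unique morphism of
    -- virtual crystals
    (∀ g₀ : ↥M →ₗ[WittVector p k] D', (∀ x : ↥M, g₀ x ∈ M') →
      (∀ (r : ℤ) (x : ↥M), (x : D) ∈ crystalComponentSet p k D ϕ M r →
        g₀ x ∈ crystalComponentSet p k D' ϕ' M' r) →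
      (∀ (r : ℤ) (x y : ↥M), (x : D) ∈ crystalComponentSet p k D ϕ M r →
        ϕ (x : D) = (p : FractionRing (WittVector p k)) ^ r • (y : D) →
        ϕ' (g₀ x) = (p : FractionRing (WittVector p k)) ^ r • g₀ y) →
      ∃! g : D →ₗ[FractionRing (WittVector p k)] D',
        (∀ x : ↥M, g (x : D) = g₀ x) ∧ (∀ x : D, g (ϕ x) = ϕ' (g x))) :=
  crystal_functor_fully_faithful_general p (hp := hp) k σB D ϕ hsemi M hspan D' ϕ' hsemi' M'
end

section
/- Let R be a commutative ring and let M be a quasi-rigid gauge over R. If some component M^s has finite length as an R-module, then every component M^r has finite length, and all components have the same length. -/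
universe u v

variable {R : Type u} [CommRing R] {p : ℕ}

/-- A gauge is quasi-rigid if `ker f = im v` and `ker v = im f` at every spot, i.e. the
sequence `M r → M (r+1) → M r → M (r+1)` (maps `f, v, f`) is exact. -/
def GaugeData.IsQuasiRigid (G : GaugeData R p) : Prop :=
  ∀ r : ℤ, LinearMap.ker (G.f r) = LinearMap.range (G.v r) ∧
    LinearMap.ker (G.v r) = LinearMap.range (G.f r)

/-!
Every `φ : A → B` splits `length A = length (ker φ) + length (range φ)` in `ℕ∞`, and exactness of
`M r → M (r+1) → M r → M (r+1)` identifies the two pieces with `length (range v)` and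
`length (ker v)`, whose sum is `length (M (r+1))`. Hence all components have the same length in
`ℕ∞`, with no finiteness needed; it is finite because that of `M s` is.
-/

theorem LinearMap.length_eq_length_ker_add_length_range {R A B : Type*} [Ring R]
    [AddCommGroup A] [Module R A] [AddCommGroup B] [Module R B] (φ : A →ₗ[R] B) :
    Module.length R A = Module.length R (LinearMap.ker φ) + Module.length R (LinearMap.range φ) :=
  Module.length_eq_add_of_exact (LinearMap.ker φ).subtype φ.rangeRestrict
    (Submodule.injective_subtype _) φ.surjective_rangeRestrict
    (LinearMap.exact_iff.mpr (by rw [LinearMap.ker_rangeRestrict, Submodule.range_subtype]))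

theorem Module.length_eq_of_ker_eq_range_of_ker_eq_range {R A B : Type*} [Ring R]
    [AddCommGroup A] [Module R A] [AddCommGroup B] [Module R B] {φ : A →ₗ[R] B}
    {ψ : B →ₗ[R] A} (hφ : LinearMap.ker φ = LinearMap.range ψ)
    (hψ : LinearMap.ker ψ = LinearMap.range φ) :
    Module.length R A = Module.length R B := by
  rw [φ.length_eq_length_ker_add_length_range, ψ.length_eq_length_ker_add_length_range, hφ, hψ,
    add_comm]

theorem Module.exists_compositionSeries_length_eq {R M : Type*} [Ring R] [AddCommGroup M]
    [Module R M] (h : IsFiniteLength R M) :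
    ∃ cs : CompositionSeries (Submodule R M),
      cs.head = ⊥ ∧ cs.last = ⊤ ∧ (cs.length : ℕ∞) = Module.length R M := by
  obtain ⟨cs, h_head, h_last⟩ := isFiniteLength_iff_exists_compositionSeries.mp h
  exact ⟨cs, h_head, h_last, Module.length_compositionSeries cs h_head h_last⟩

namespace GaugeData

theorem IsQuasiRigid.length_succ {G : GaugeData R p} (hG : G.IsQuasiRigid) (r : ℤ) :
    Module.length R (G.M (r + 1)) = Module.length R (G.M r) :=
  (Module.length_eq_of_ker_eq_range_of_ker_eq_range (hG r).1 (hG r).2).symm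

theorem IsQuasiRigid.length_eq {G : GaugeData R p} (hG : G.IsQuasiRigid) (r s : ℤ) :
    Module.length R (G.M r) = Module.length R (G.M s) := by
  have hperiodic : Function.Periodic (fun n => Module.length R (G.M n)) 1 := hG.length_succ
  have h_const (n : ℤ) : Module.length R (G.M n) = Module.length R (G.M 0) := by
    rw [← mul_one n]
    exact hperiodic.int_mul_eq n
  rw [h_const r, h_const s]

end GaugeData

theorem gauge_quasiRigid_length_constant_general (p : ℕ) {R : Type u} [CommRing R]
    (G : GaugeData R p) (hqr : G.IsQuasiRigid) (s : ℤ) (hs : IsFiniteLength R (G.M s)) :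
    (∀ r : ℤ, IsFiniteLength R (G.M r)) ∧
      ∃ c : ℕ, ∀ r : ℤ, ∃ cs : CompositionSeries (Submodule R (G.M r)),
        cs.head = ⊥ ∧ cs.last = ⊤ ∧ cs.length = c := by
  have h_finite (r : ℤ) : IsFiniteLength R (G.M r) := by
    rw [← Module.length_ne_top_iff, hqr.length_eq r s]
    exact Module.length_ne_top_iff.mpr hs
  refine ⟨h_finite, (Module.length R (G.M s)).toNat, fun r => ?_⟩
  obtain ⟨cs, h_head, h_last, h_length⟩ := Module.exists_compositionSeries_length_eq (h_finite r)
  refine ⟨cs, h_head, h_last, ?_⟩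
  rw [← hqr.length_eq r s, ← h_length, ENat.toNat_natCast]

theorem gauge_quasiRigid_length_constant (p : ℕ) (hp : p.Prime) {R : Type u} [CommRing R]
    (G : GaugeData R p) (hqr : G.IsQuasiRigid) (s : ℤ) (hs : IsFiniteLength R (G.M s)) :
    (∀ r : ℤ, IsFiniteLength R (G.M r)) ∧
      ∃ c : ℕ, ∀ r : ℤ, ∃ cs : CompositionSeries (Submodule R (G.M r)),
        cs.head = ⊥ ∧ cs.last = ⊤ ∧ cs.length = c :=
  gauge_quasiRigid_length_constant_general p G hqr s hs
end

section
/- Let k be a perfect field of characteristic p > 0 and W = W(k). Let (M, f, v, φ) be a φ-gauge over W of finite type concentrated in [0,b] whose underlying gauge is free, so φ : M^b → M^0 is a σ-semilinear bijection. Set L = M^0 and let ϕ = φ∘f^b : L → L (a σ-semilinear map). Then for every 0 ≤ r ≤ b the map v^r : M^r → M^0 = L is injective and its image is exactly L^r = {x ∈ L : ϕ(x) ∈ p^r·L}. -/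
universe u v

variable {R : Type u} [CommRing R] {p : ℕ}

/-- The direct sum of a finite family of gauges. -/
def gaugeDirectSum {ι : Type} [Fintype ι] (G : ι → GaugeData R p) : GaugeData R p where
  M r := ∀ i, (G i).M r
  f r := LinearMap.pi fun i => (G i).f r ∘ₗ LinearMap.proj i
  v r := LinearMap.pi fun i => (G i).v r ∘ₗ LinearMap.proj i
  fv := by
    intro r x
    funext i
    simpa using (G i).fv r (x i)
  vf := by
    intro r x
    funext i
    simpa using (G i).vf r (x i)

/-- An isomorphism of gauges: a family of linear equivalences commuting with `f` and `v`. -/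
def GaugeData.IsoTo (G G' : GaugeData R p) : Prop :=
  ∃ e : ∀ r : ℤ, G.M r ≃ₗ[R] G'.M r,
    (∀ (r : ℤ) (x : G.M r), e (r + 1) (G.f r x) = G'.f r (e r x)) ∧
      (∀ (r : ℤ) (x : G.M (r + 1)), e r (G.v r x) = G'.v r (e (r + 1) x))

/-- The standard free gauge of degree `d` over the Witt vectors `W`: all components are `W`,
`f` is the identity in degrees `≥ d` and multiplication by `p` below, and `v : M^{r+1} → M^r`
is multiplication by `p` for `r ≥ d` and the identity for `r < d`. -/
noncomputable def stdFreeGaugeWitt (p : ℕ) [hp : Fact p.Prime] (k : Type) [Field k] [CharP k p]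
    (d : ℤ) : GaugeData (WittVector p k) p where
  M _ := WittVector p k
  f r := if d ≤ r then LinearMap.id else (p : WittVector p k) • LinearMap.id
  v r := if r + 1 ≤ d then LinearMap.id else (p : WittVector p k) • LinearMap.id
  fv := by
    intro r x
    try dsimp only
    split_ifs
    · exfalso; omega
    · simp
    · simp
    · exfalso; omega
  vf := by
    intro r x
    try dsimp only
    split_ifs
    · exfalso; omega
    · simp
    · simp
    · exfalso; omega

/-- A gauge over `W = W(k)` is free if it is isomorphic to a finite direct sum of standard
free gauges. -/
def GaugeData.IsFreeWitt {p : ℕ} [hp : Fact p.Prime] {k : Type} [Field k] [CharP k p]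
    (G : GaugeData (WittVector p k) p) : Prop :=
  ∃ (n : ℕ) (d : Fin n → ℤ), G.IsoTo (gaugeDirectSum fun i => stdFreeGaugeWitt p k (d i))


/-!
Transport everything along the isomorphism to a sum of standard free gauges of degrees
`dᵢ`. Concentration in `[0, b]` forces `0 ≤ dᵢ ≤ b`, and on the standard gauge of degree `d`
the map `v^r : M^r → M^0` is multiplication by `p^(r - d)⁺` while `f^b : M^0 → M^b` is
multiplication by `p^d`. Hence `v^r` is injective, and `x` lies in its image iff
`p^(r - d)⁺ ∣ x` iff `p^r ∣ p^d x`. Finally `φ` is a bijection commuting with `p^r`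
(as `σ p = p`), so `p^r ∣ f^b x` iff `p^r ∣ φ (f^b x)`.
-/

theorem exists_pow_tsub_mul_eq_iff {M : Type*} [CommMonoidWithZero M] [IsCancelMulZero M]
    {q : M} (hq : q ≠ 0) (n r : ℕ) (x : M) :
    (∃ z, q ^ (r - n) * z = x) ↔ ∃ u, q ^ n * x = q ^ r * u := by
  rcases le_total r n with hrn | hnr
  · refine iff_of_true ⟨x, by simp [Nat.sub_eq_zero_of_le hrn]⟩ ⟨q ^ (n - r) * x, ?_⟩
    rw [← mul_assoc, ← pow_add, Nat.add_sub_cancel' hrn]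
  · have hsplit : q ^ r = q ^ n * q ^ (r - n) := by rw [← pow_add, Nat.add_sub_cancel' hnr]
    simp_rw [hsplit, mul_assoc, mul_right_inj' (pow_ne_zero n hq), eq_comm]

theorem exists_map_eq_smul_iff {S M N : Type*} [SMul S M] [SMul S N] {φ : M → N}
    (hφ : Function.Bijective φ) {c : S} (hc : ∀ x, φ (c • x) = c • φ x) (m : M) :
    (∃ y, φ m = c • y) ↔ ∃ u, m = c • u := by
  rw [hφ.surjective.exists]
  simp_rw [← hc, hφ.injective.eq_iff]

theorem Function.Bijective.of_piMap {ι : Type*} {α β : ι → Type*} [∀ i, Nonempty (α i)]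
    [∀ i, Nonempty (β i)] {f : ∀ i, α i → β i} (h : Function.Bijective (Pi.map f))
    (i : ι) : Function.Bijective (f i) := by
  classical
  refine ⟨Pi.map_injective.mp h.injective i, fun y => ?_⟩
  obtain ⟨x, hx⟩ := h.surjective (Function.update (fun j => Classical.arbitrary (β j)) i y)
  exact ⟨x i, by simpa using congrFun hx i⟩

namespace GaugeData

variable {G G' : GaugeData R p} (e : ∀ r : ℤ, G.M r ≃ₗ[R] G'.M r)

theorem map_cast {r s : ℤ} (h : r = s) (x : G.M r) : e s (G.cast h x) = G'.cast h (e r x) := by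
  subst h; rfl

theorem map_fpow (hef : ∀ (r : ℤ) (x : G.M r), e (r + 1) (G.f r x) = G'.f r (e r x)) :
    ∀ (a : ℕ) (r : ℤ) (x : G.M r), e (r + a) (G.fpow a r x) = G'.fpow a r (e r x)
  | 0, r, x => map_cast e _ x
  | a + 1, r, x => by
      simp only [fpow, LinearMap.comp_apply, LinearEquiv.coe_coe]
      rw [map_cast e, map_fpow hef a, hef]

theorem map_vpow (hev : ∀ (r : ℤ) (x : G.M (r + 1)), e r (G.v r x) = G'.v r (e (r + 1) x)) :
    ∀ (c : ℕ) (r : ℤ) (x : G.M r), e (r - c) (G.vpow c r x) = G'.vpow c r (e r x)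
  | 0, r, x => map_cast e _ x
  | c + 1, r, x => by
      simp only [vpow, LinearMap.comp_apply, LinearEquiv.coe_coe]
      rw [map_cast e, map_vpow hev c, hev, map_cast e]

theorem vpow_injective_of_iso
    (hev : ∀ (r : ℤ) (x : G.M (r + 1)), e r (G.v r x) = G'.v r (e (r + 1) x))
    {c : ℕ} {r : ℤ} (h : Function.Injective (G'.vpow c r)) :
    Function.Injective (G.vpow c r) := fun x y hxy =>
  (e r).injective <| h <| by rw [← map_vpow e hev, ← map_vpow e hev, hxy]

theorem exists_cast_vpow_eq_iff_of_iso
    (hev : ∀ (r : ℤ) (x : G.M (r + 1)), e r (G.v r x) = G'.v r (e (r + 1) x))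
    {c : ℕ} {r s : ℤ} (h : r - c = s) (x : G.M s) :
    (∃ z, G.cast h (G.vpow c r z) = x) ↔ ∃ z, G'.cast h (G'.vpow c r z) = e s x := by
  rw [(e r).surjective.exists]
  simp_rw [← map_vpow e hev, ← map_cast e, (e s).injective.eq_iff]

theorem exists_cast_fpow_eq_smul_iff_of_iso
    (hef : ∀ (r : ℤ) (x : G.M r), e (r + 1) (G.f r x) = G'.f r (e r x))
    {a : ℕ} {r s : ℤ} (h : r + a = s) (c : R) (x : G.M r) :
    (∃ u, G.cast h (G.fpow a r x) = c • u) ↔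
      ∃ u, G'.cast h (G'.fpow a r (e r x)) = c • u := by
  rw [(e s).surjective.exists]
  simp_rw [← map_smul, ← map_fpow e hef, ← map_cast e, (e s).injective.eq_iff]

theorem ConcentratedIn.of_isoTo {a b : ℤ} (hG : G.ConcentratedIn a b) (he : G.IsoTo G') :
    G'.ConcentratedIn a b := by
  obtain ⟨e, hef, hev⟩ := he
  have hv : ∀ r, ⇑(G'.v r) = e r ∘ G.v r ∘ (e (r + 1)).symm := fun r => funext fun x => by
    simp [hev]
  have hf : ∀ r, ⇑(G'.f r) = e (r + 1) ∘ G.f r ∘ (e r).symm := fun r => funext fun x => by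
    simp [hef]
  exact ⟨fun r hr => hv r ▸ (e r).bijective.comp ((hG.1 r hr).comp (e (r + 1)).symm.bijective),
    fun r hr => hf r ▸ (e (r + 1)).bijective.comp ((hG.2 r hr).comp (e r).symm.bijective)⟩

end GaugeData

section DirectSum

variable {ι : Type} [Fintype ι] (G : ι → GaugeData R p)

theorem gaugeDirectSum_ext_iff {r : ℤ} {x y : (gaugeDirectSum G).M r} :
    x = y ↔ ∀ i, x i = y i :=
  funext_iff

theorem gaugeDirectSum_smul_apply {r : ℤ} (c : R) (x : (gaugeDirectSum G).M r) (i : ι) :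
    (c • x) i = c • x i :=
  rfl

theorem gaugeDirectSum_cast_apply {r s : ℤ} (h : r = s) (x : (gaugeDirectSum G).M r) (i : ι) :
    (gaugeDirectSum G).cast h x i = (G i).cast h (x i) := by
  subst h; rfl

theorem gaugeDirectSum_f_apply (r : ℤ) (x : (gaugeDirectSum G).M r) (i : ι) :
    (gaugeDirectSum G).f r x i = (G i).f r (x i) :=
  rfl

theorem gaugeDirectSum_v_apply (r : ℤ) (x : (gaugeDirectSum G).M (r + 1)) (i : ι) :
    (gaugeDirectSum G).v r x i = (G i).v r (x i) :=
  rfl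

theorem gaugeDirectSum_fpow_apply :
    ∀ (a : ℕ) (r : ℤ) (x : (gaugeDirectSum G).M r) (i : ι),
      (gaugeDirectSum G).fpow a r x i = (G i).fpow a r (x i)
  | 0, r, x, i => gaugeDirectSum_cast_apply G _ x i
  | a + 1, r, x, i => by
      simp only [GaugeData.fpow, LinearMap.comp_apply, LinearEquiv.coe_coe,
        gaugeDirectSum_cast_apply, gaugeDirectSum_fpow_apply a, gaugeDirectSum_f_apply]

theorem gaugeDirectSum_vpow_apply :
    ∀ (c : ℕ) (r : ℤ) (x : (gaugeDirectSum G).M r) (i : ι),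
      (gaugeDirectSum G).vpow c r x i = (G i).vpow c r (x i)
  | 0, r, x, i => gaugeDirectSum_cast_apply G _ x i
  | c + 1, r, x, i => by
      simp only [GaugeData.vpow, LinearMap.comp_apply, LinearEquiv.coe_coe,
        gaugeDirectSum_cast_apply, gaugeDirectSum_vpow_apply c, gaugeDirectSum_v_apply]

theorem GaugeData.ConcentratedIn.of_gaugeDirectSum {a b : ℤ}
    (h : (gaugeDirectSum G).ConcentratedIn a b) (i : ι) : (G i).ConcentratedIn a b :=
  ⟨fun r hr => Function.Bijective.of_piMap (f := fun i => (G i).v r) (h.1 r hr) i,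
    fun r hr => Function.Bijective.of_piMap (f := fun i => (G i).f r) (h.2 r hr) i⟩

end DirectSum

namespace stdFreeGaugeWitt

variable (p) [Fact p.Prime] (k : Type) [Field k] [CharP k p]

section

variable (d : ℤ)

/-- Every component of the standard free gauge is `W` itself; computing through this
identification keeps the index-dependent component types out of the way. -/
noncomputable def toWitt (r : ℤ) :
    (stdFreeGaugeWitt p k d).M r ≃ₗ[WittVector p k] WittVector p k :=
  LinearEquiv.refl _ _

variable {p k d}

theorem toWitt_cast {r s : ℤ} (h : r = s) (x : (stdFreeGaugeWitt p k d).M r) :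
    toWitt p k d s ((stdFreeGaugeWitt p k d).cast h x) = toWitt p k d r x := by
  subst h; rfl

theorem toWitt_f (r : ℤ) (x : (stdFreeGaugeWitt p k d).M r) :
    toWitt p k d (r + 1) ((stdFreeGaugeWitt p k d).f r x) =
      if d ≤ r then toWitt p k d r x else p * toWitt p k d r x := by
  simp only [stdFreeGaugeWitt]
  split_ifs <;> rfl

theorem toWitt_v (r : ℤ) (x : (stdFreeGaugeWitt p k d).M (r + 1)) :
    toWitt p k d r ((stdFreeGaugeWitt p k d).v r x) =
      if r + 1 ≤ d then toWitt p k d (r + 1) x else p * toWitt p k d (r + 1) x := by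
  simp only [stdFreeGaugeWitt]
  split_ifs <;> rfl

theorem toWitt_fpow :
    ∀ (a : ℕ) (r : ℤ) (x : (stdFreeGaugeWitt p k d).M r),
      toWitt p k d (r + a) ((stdFreeGaugeWitt p k d).fpow a r x) =
        (p : WittVector p k) ^ (min d (r + a) - min d r).toNat * toWitt p k d r x
  | 0, r, x => by simp [GaugeData.fpow, toWitt_cast]
  | a + 1, r, x => by
      simp only [GaugeData.fpow, LinearMap.comp_apply, LinearEquiv.coe_coe, toWitt_cast,
        toWitt_fpow a, toWitt_f]
      split_ifs
      · congr 2; push_cast; omega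
      · rw [← mul_assoc, ← pow_succ]; congr 2; push_cast; omega

theorem toWitt_vpow :
    ∀ (c : ℕ) (r : ℤ) (x : (stdFreeGaugeWitt p k d).M r),
      toWitt p k d (r - c) ((stdFreeGaugeWitt p k d).vpow c r x) =
        (p : WittVector p k) ^ (r - max (r - c) d).toNat * toWitt p k d r x
  | 0, r, x => by simp [GaugeData.vpow, toWitt_cast, show (r - max r d).toNat = 0 by omega]
  | c + 1, r, x => by
      simp only [GaugeData.vpow, LinearMap.comp_apply, LinearEquiv.coe_coe, toWitt_cast,
        toWitt_vpow c, toWitt_v]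
      split_ifs
      · congr 2; push_cast; omega
      · rw [← mul_assoc, ← pow_succ]; congr 2; push_cast; omega

theorem mem_Icc_of_concentratedIn {a b : ℤ} (h : (stdFreeGaugeWitt p k d).ConcentratedIn a b) :
    d ∈ Set.Icc a b := by
  have hp : ¬IsUnit (p : WittVector p k) := (WittVector.irreducible p).not_isUnit
  constructor
  · by_contra! hda
    obtain ⟨x, hx⟩ := (h.1 d (by omega)).2 ((toWitt p k d d).symm 1)
    apply_fun toWitt p k d d at hx
    rw [toWitt_v, if_neg (by omega), LinearEquiv.apply_symm_apply] at hx
    exact hp (IsUnit.of_mul_eq_one _ hx)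
  · by_contra! hbd
    obtain ⟨x, hx⟩ := (h.2 b le_rfl).2 ((toWitt p k d (b + 1)).symm 1)
    apply_fun toWitt p k d (b + 1) at hx
    rw [toWitt_f, if_neg (by omega), LinearEquiv.apply_symm_apply] at hx
    exact hp (IsUnit.of_mul_eq_one _ hx)

theorem exists_vpow_eq_iff {b : ℕ} (hd : d ∈ Set.Icc 0 (b : ℤ)) (r : ℕ)
    (x : (stdFreeGaugeWitt p k d).M 0) :
    (∃ z, (stdFreeGaugeWitt p k d).cast (sub_self (r : ℤ))
        ((stdFreeGaugeWitt p k d).vpow r r z) = x) ↔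
      ∃ u, (stdFreeGaugeWitt p k d).cast (zero_add (b : ℤ))
        ((stdFreeGaugeWitt p k d).fpow b 0 x) = (p : WittVector p k) ^ r • u := by
  rw [(toWitt p k d r).symm.surjective.exists, (toWitt p k d b).symm.surjective.exists]
  simp_rw [← (toWitt p k d 0).injective.eq_iff, ← (toWitt p k d b).injective.eq_iff,
    toWitt_cast, toWitt_vpow, toWitt_fpow, map_smul, smul_eq_mul,
    LinearEquiv.apply_symm_apply]
  obtain ⟨hd0, hdb⟩ := hd
  rw [show ((r : ℤ) - max ((r : ℤ) - r) d).toNat = r - d.toNat by omega,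
    show (min d (0 + b) - min d 0).toNat = d.toNat by omega]
  exact exists_pow_tsub_mul_eq_iff (WittVector.irreducible p).ne_zero _ _ _

end

variable {p k} {ι : Type} [Fintype ι] (d : ι → ℤ)

local notation "H" => gaugeDirectSum fun i => stdFreeGaugeWitt p k (d i)

theorem sum_vpow_injective (c : ℕ) (r : ℤ) : Function.Injective ((H).vpow c r) := by
  intro x y hxy
  funext i
  have hi := congrArg (fun z => toWitt p k (d i) (r - c) (z i)) hxy
  simp only [gaugeDirectSum_vpow_apply, toWitt_vpow] at hi
  exact (toWitt p k (d i) r).injective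
    (mul_left_cancel₀ (pow_ne_zero _ (WittVector.irreducible p).ne_zero) hi)

theorem sum_exists_vpow_eq_iff {b : ℕ} (hd : ∀ i, d i ∈ Set.Icc 0 (b : ℤ)) (r : ℕ)
    (x : (H).M 0) :
    (∃ z, (H).cast (sub_self (r : ℤ)) ((H).vpow r r z) = x) ↔
      ∃ u, (H).cast (zero_add (b : ℤ)) ((H).fpow b 0 x) = (p : WittVector p k) ^ r • u := by
  simp only [gaugeDirectSum_ext_iff, gaugeDirectSum_cast_apply, gaugeDirectSum_vpow_apply,
    gaugeDirectSum_fpow_apply, gaugeDirectSum_smul_apply]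
  constructor
  · rintro ⟨z, hz⟩
    choose u hu using fun i => (exists_vpow_eq_iff (hd i) r (x i)).1 ⟨z i, hz i⟩
    exact ⟨u, hu⟩
  · rintro ⟨u, hu⟩
    choose z hz using fun i => (exists_vpow_eq_iff (hd i) r (x i)).2 ⟨u i, hu i⟩
    exact ⟨z, hz⟩

end stdFreeGaugeWitt

theorem phiGauge_vpow_image_general (p : ℕ) [hp : Fact p.Prime] (k : Type) [Field k] [CharP k p]
    [PerfectRing k p] (G : GaugeData (WittVector p k) p) (b : ℕ)
    (hconc : G.ConcentratedIn 0 (b : ℤ)) (hfree : G.IsFreeWitt)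
    (φ : G.M (b : ℤ) → G.M 0)
    (hφbij : Function.Bijective φ)
    (hφsemi : ∀ (c : WittVector p k) (x : G.M (b : ℤ)),
      φ (c • x) = (WittVector.frobeniusEquiv p k c) • φ x) :
    ∀ r : ℕ, r ≤ b →
      Function.Injective
        (fun x : G.M (r : ℤ) => G.cast (sub_self (r : ℤ)) (G.vpow r (r : ℤ) x)) ∧
      ∀ x : G.M 0,
        (∃ z : G.M (r : ℤ), G.cast (sub_self (r : ℤ)) (G.vpow r (r : ℤ) z) = x) ↔
          ∃ y : G.M 0, φ (G.cast (zero_add ((b : ℕ) : ℤ)) (G.fpow b 0 x)) =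
            (p : WittVector p k) ^ r • y := by
  obtain ⟨n, d, e, hef, hev⟩ := hfree
  have hd : ∀ i, d i ∈ Set.Icc 0 (b : ℤ) := fun i =>
    stdFreeGaugeWitt.mem_Icc_of_concentratedIn
      ((hconc.of_isoTo ⟨e, hef, hev⟩).of_gaugeDirectSum _ i)
  have hφp (r : ℕ) (u : G.M b) :
      φ ((p : WittVector p k) ^ r • u) = (p : WittVector p k) ^ r • φ u := by
    rw [hφsemi, map_pow, map_natCast]
  intro r _
  refine ⟨(G.cast _).injective.comp (GaugeData.vpow_injective_of_iso e hev
    (stdFreeGaugeWitt.sum_vpow_injective d r r)), fun x => ?_⟩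
  rw [exists_map_eq_smul_iff hφbij (hφp r), GaugeData.exists_cast_vpow_eq_iff_of_iso e hev,
    GaugeData.exists_cast_fpow_eq_smul_iff_of_iso e hef]
  exact stdFreeGaugeWitt.sum_exists_vpow_eq_iff d hd r (e 0 x)

/-- Let `(M, f, v, φ)` be a φ-gauge of finite type over `W(k)`, concentrated in `[0, b]`,
whose underlying gauge is free, and let `ϕ = φ ∘ f^b : L → L` on `L = M^0`.  Then for
`0 ≤ r ≤ b` the map `v^r : M^r → M^0 = L` is injective with image exactly
`L^r = {x ∈ L : ϕ(x) ∈ p^r·L}`. -/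
theorem phiGauge_vpow_image (p : ℕ) [hp : Fact p.Prime] (k : Type) [Field k] [CharP k p]
    [PerfectRing k p] (G : GaugeData (WittVector p k) p) (hft : G.IsFiniteType) (b : ℕ)
    (hconc : G.ConcentratedIn 0 (b : ℤ)) (hfree : G.IsFreeWitt)
    (φ : G.M (b : ℤ) → G.M 0) (hφadd : ∀ x y, φ (x + y) = φ x + φ y)
    (hφbij : Function.Bijective φ)
    (hφsemi : ∀ (c : WittVector p k) (x : G.M (b : ℤ)),
      φ (c • x) = (WittVector.frobeniusEquiv p k c) • φ x) :
    ∀ r : ℕ, r ≤ b →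
      Function.Injective
        (fun x : G.M (r : ℤ) => G.cast (sub_self (r : ℤ)) (G.vpow r (r : ℤ) x)) ∧
      ∀ x : G.M 0,
        (∃ z : G.M (r : ℤ), G.cast (sub_self (r : ℤ)) (G.vpow r (r : ℤ) z) = x) ↔
          ∃ y : G.M 0, φ (G.cast (zero_add ((b : ℕ) : ℤ)) (G.fpow b 0 x)) =
            (p : WittVector p k) ^ r • y :=
  phiGauge_vpow_image_general p (hp := hp) k G b hconc hfree φ hφbij hφsemi
end

section
/- Let k be a perfect field of characteristic p > 0 and W = W(k). Let M be a gauge of finite type over W whose components are finitely generated free W-modules and which is concentrated in an interval [a, a+1] of length 1 (in particular, any such gauge concentrated in a single point [a,a]). Then M is a free W-gauge. -/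
universe u v

variable {R : Type u} [CommRing R] {p : ℕ}

/-!
Since `v ∘ f = p` and `M^a` is torsion free, `f : M^a → M^{a+1}` is injective, and since
`f ∘ v = p` its image contains `p M^{a+1}`. The Smith normal form of this image over the discrete
valuation ring `W` has all elementary divisors `1` or `p` (up to units), so in suitable bases `f`
and `v` in degree `a` are diagonal with entries `1, p` resp. `p, 1`: the pair `M^a → M^{a+1}` is
that of a sum of standard gauges of degrees `a` and `a + 1`. A gauge concentrated in `[a, a+1]`
is recovered from this pair by transport along the isomorphisms `f` above `a + 1` and `v` below
`a`, so the identification of the pairs extends to an isomorphism of gauges.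
-/

section SmithNormalForm

variable [IsDomain R] [IsPrincipalIdealRing R] {π : R}

theorem Submodule.exists_smith_normal_form_of_smul_mem {M : Type*} [AddCommGroup M] [Module R M]
    [Module.Finite R M] [Module.Free R M] (hπ : Irreducible π) (N : Submodule R M)
    (hN : ∀ x : M, π • x ∈ N) :
    ∃ (n : ℕ) (b : Module.Basis (Fin n) R M) (bN : Module.Basis (Fin n) R N) (s : Fin n → Bool),
      ∀ i, (bN i : M) = (if s i then 1 else π) • b i := by
  obtain ⟨n, snf⟩ := N.smithNormalForm (Module.Free.chooseBasis R M)
  have hsurj : Function.Surjective snf.f := by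
    intro j
    by_contra hj
    have h := snf.repr_eq_zero_of_notMem_range ⟨π • snf.bM j, hN _⟩ (by simpa using hj)
    simp only [map_smul, Module.Basis.repr_self, Finsupp.smul_apply, Finsupp.single_eq_same,
      smul_eq_mul, mul_one] at h
    exact hπ.ne_zero h
  have hdvd : ∀ i, snf.a i ∣ π := by
    intro i
    have h := snf.repr_apply_embedding_eq_repr_smul ⟨π • snf.bM (snf.f i), hN _⟩ (i := i)
    simp only [map_smul, Module.Basis.repr_self, Finsupp.smul_apply, Finsupp.single_eq_same,
      smul_eq_mul, mul_one] at h
    exact ⟨_, h⟩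
  have hunit : ∀ i, ∃ (s : Bool) (u : Rˣ), snf.a i = (if s then 1 else π) * u := by
    intro i
    rcases hπ.dvd_iff.1 (hdvd i) with ⟨u, hu⟩ | ⟨u, hu⟩
    · exact ⟨true, u, by simp [hu]⟩
    · exact ⟨false, u, by simp [hu]⟩
  choose s u hsu using hunit
  let e : Fin n ≃ _ := Equiv.ofBijective snf.f ⟨snf.f.injective, hsurj⟩
  refine ⟨n, (snf.bM.reindex e.symm).unitsSMul u, snf.bN, s, fun i => ?_⟩
  have he : e i = snf.f i := rfl
  rw [snf.snf, hsu, Module.Basis.unitsSMul_apply, Module.Basis.reindex_apply, e.symm_symm, he,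
    Units.smul_def, mul_smul]

theorem LinearMap.exists_diagonal_equivs_of_comp_eq_smul {N₀ N₁ : Type*} [AddCommGroup N₀]
    [Module R N₀] [Module.IsTorsionFree R N₀] [AddCommGroup N₁] [Module R N₁]
    [Module.Finite R N₁] [Module.Free R N₁] (hπ : Irreducible π) (f : N₀ →ₗ[R] N₁)
    (v : N₁ →ₗ[R] N₀) (hfv : ∀ y, f (v y) = π • y) (hvf : ∀ x, v (f x) = π • x) :
    ∃ (n : ℕ) (E₀ : N₀ ≃ₗ[R] (Fin n → R)) (E₁ : N₁ ≃ₗ[R] (Fin n → R)) (s : Fin n → Bool),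
      (∀ x i, E₁ (f x) i = if s i then E₀ x i else π * E₀ x i) ∧
        ∀ y i, E₀ (v y) i = if s i then π * E₁ y i else E₁ y i := by
  have hinj : Function.Injective f := fun x y hxy =>
    smul_right_injective N₀ hπ.ne_zero (by simpa only [hvf] using congrArg v hxy)
  obtain ⟨n, b, bN, s, hb⟩ :=
    (LinearMap.range f).exists_smith_normal_form_of_smul_mem hπ fun y => ⟨v y, hfv y⟩
  let E₀ := (LinearEquiv.ofInjective f hinj).trans bN.equivFun
  have hE₀ : ∀ x, f x = ∑ j, E₀ x j • (bN j : N₁) := fun x => by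
    have h := congrArg Subtype.val (bN.sum_equivFun (LinearEquiv.ofInjective f hinj x))
    rw [Submodule.coe_sum] at h
    exact h.symm
  have hf : ∀ x i, b.equivFun (f x) i = if s i then E₀ x i else π * E₀ x i := by
    intro x i
    have h : f x = b.equivFun.symm fun j => (if s j then 1 else π) * E₀ x j := by
      simp only [hE₀, hb, b.equivFun_symm_apply, smul_smul, mul_comm]
    rw [h, LinearEquiv.apply_symm_apply]
    by_cases hs : s i <;> simp [hs]
  refine ⟨n, E₀, b.equivFun, s, hf, fun y i => ?_⟩
  have h := hf (v y) i
  rw [hfv, map_smul, Pi.smul_apply, smul_eq_mul] at h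
  by_cases hs : s i
  · simpa [hs] using h.symm
  · simp only [hs] at h ⊢
    exact mul_left_cancel₀ hπ.ne_zero h.symm

end SmithNormalForm

namespace GaugeData

variable (G : GaugeData R p)

noncomputable def upEquiv {b : ℤ} (hf : ∀ r, b ≤ r → Function.Bijective (G.f r)) :
    ∀ r, b ≤ r → (G.M r ≃ₗ[R] G.M b) :=
  Int.leInduction (motive := fun r _ => G.M r ≃ₗ[R] G.M b) (LinearEquiv.refl R _)
    fun r hr e => (LinearEquiv.ofBijective (G.f r) (hf r hr)).symm ≪≫ₗ e

noncomputable def downEquiv {a : ℤ} (hv : ∀ r, r + 1 ≤ a → Function.Bijective (G.v r)) :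
    ∀ r, r ≤ a → (G.M r ≃ₗ[R] G.M a) :=
  Int.leInductionDown (motive := fun r _ => G.M r ≃ₗ[R] G.M a) (LinearEquiv.refl R _)
    fun r hr e => (LinearEquiv.ofBijective (G.v (r - 1)) (hv _ (by omega))).symm ≪≫ₗ
      G.cast (sub_add_cancel r 1) ≪≫ₗ e

section upEquiv

variable {G} {b : ℤ} (hf : ∀ r, b ≤ r → Function.Bijective (G.f r))

theorem upEquiv_self : G.upEquiv hf b le_rfl = LinearEquiv.refl R _ :=
  Int.leInduction_base _ _

theorem upEquiv_f {r : ℤ} (hr : b ≤ r) (x : G.M r) :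
    G.upEquiv hf (r + 1) (by omega) (G.f r x) = G.upEquiv hf r hr x := by
  rw [upEquiv, Int.leInduction_add_one _ _ r hr, LinearEquiv.trans_apply]
  congr 1
  exact (LinearEquiv.ofBijective (G.f r) (hf r hr)).symm_apply_apply x

theorem upEquiv_symm_apply {r : ℤ} (hr : b ≤ r) (y : G.M b) :
    (G.upEquiv hf (r + 1) (by omega)).symm y = G.f r ((G.upEquiv hf r hr).symm y) := by
  rw [LinearEquiv.symm_apply_eq, upEquiv_f hf hr, LinearEquiv.apply_symm_apply]

end upEquiv

section downEquiv

variable {G} {a : ℤ} (hv : ∀ r, r + 1 ≤ a → Function.Bijective (G.v r))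

theorem downEquiv_self : G.downEquiv hv a le_rfl = LinearEquiv.refl R _ :=
  Int.leInductionDown_base _ _

theorem downEquiv_cast {r s : ℤ} (h : r = s) (hr : r ≤ a) (x : G.M r) :
    G.downEquiv hv s (h ▸ hr) (G.cast h x) = G.downEquiv hv r hr x := by
  subst h; rfl

theorem downEquiv_v {r : ℤ} (hr : r + 1 ≤ a) (y : G.M (r + 1)) :
    G.downEquiv hv r (by omega) (G.v r y) = G.downEquiv hv (r + 1) hr y := by
  obtain ⟨s, rfl⟩ : ∃ s, r = s - 1 := ⟨r + 1, by ring⟩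
  have hs : s ≤ a := by omega
  have h : G.downEquiv hv (s - 1) (by omega) = _ := Int.leInductionDown_sub_one _ _ s hs
  rw [h, LinearEquiv.trans_apply, LinearEquiv.trans_apply,
    LinearEquiv.ofBijective_symm_apply_apply]
  exact downEquiv_cast hv _ hr y

theorem downEquiv_symm_apply {r : ℤ} (hr : r + 1 ≤ a) (y : G.M a) :
    (G.downEquiv hv r (by omega)).symm y = G.v r ((G.downEquiv hv (r + 1) hr).symm y) := by
  rw [LinearEquiv.symm_apply_eq, downEquiv_v hv hr, LinearEquiv.apply_symm_apply]

end downEquiv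

variable {G G' : GaugeData R p}

theorem map_f_of_map_v (e : ∀ r, G.M r ≃ₗ[R] G'.M r) {r : ℤ}
    (hv : ∀ y, e r (G.v r y) = G'.v r (e (r + 1) y)) (hsurj : Function.Surjective (G.v r))
    (x : G.M r) : e (r + 1) (G.f r x) = G'.f r (e r x) := by
  obtain ⟨y, rfl⟩ := hsurj x
  rw [G.fv, hv, G'.fv, map_smul]

theorem map_v_of_map_f (e : ∀ r, G.M r ≃ₗ[R] G'.M r) {r : ℤ}
    (hf : ∀ x, e (r + 1) (G.f r x) = G'.f r (e r x)) (hsurj : Function.Surjective (G.f r))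
    (y : G.M (r + 1)) : e r (G.v r y) = G'.v r (e (r + 1) y) := by
  obtain ⟨x, rfl⟩ := hsurj y
  rw [G.vf, hf, G'.vf, map_smul]

theorem isoTo_of_concentratedIn {a : ℤ} (hG : G.ConcentratedIn a (a + 1))
    (hG' : G'.ConcentratedIn a (a + 1)) (e₀ : G.M a ≃ₗ[R] G'.M a)
    (e₁ : G.M (a + 1) ≃ₗ[R] G'.M (a + 1)) (hf : ∀ x, e₁ (G.f a x) = G'.f a (e₀ x))
    (hv : ∀ y, e₀ (G.v a y) = G'.v a (e₁ y)) : G.IsoTo G' := by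
  obtain ⟨hGv, hGf⟩ := hG
  obtain ⟨hGv', hGf'⟩ := hG'
  let e : ∀ r, G.M r ≃ₗ[R] G'.M r := fun r =>
    if h : a + 1 ≤ r then G.upEquiv hGf r h ≪≫ₗ e₁ ≪≫ₗ (G'.upEquiv hGf' r h).symm
    else G.downEquiv hGv r (by omega) ≪≫ₗ e₀ ≪≫ₗ (G'.downEquiv hGv' r (by omega)).symm
  have he_up : ∀ r (h : a + 1 ≤ r) x,
      e r x = (G'.upEquiv hGf' r h).symm (e₁ (G.upEquiv hGf r h x)) := fun r h x => by
    simp only [e, dif_pos h, LinearEquiv.trans_apply]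
  have he_down : ∀ r (h : r ≤ a) x,
      e r x = (G'.downEquiv hGv' r h).symm (e₀ (G.downEquiv hGv r h x)) := fun r h x => by
    simp only [e, dif_neg (show ¬a + 1 ≤ r by omega), LinearEquiv.trans_apply]
  have hf_high : ∀ r, a + 1 ≤ r → ∀ x, e (r + 1) (G.f r x) = G'.f r (e r x) := fun r h x => by
    rw [he_up r h, he_up (r + 1) (by omega), upEquiv_f hGf h, upEquiv_symm_apply hGf' h]
  have hv_low : ∀ r, r + 1 ≤ a → ∀ y, e r (G.v r y) = G'.v r (e (r + 1) y) := fun r h y => by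
    rw [he_down r (by omega), he_down (r + 1) h, downEquiv_v hGv h, downEquiv_symm_apply hGv' h]
  have he₀ : ∀ x, e a x = e₀ x := fun x => by
    rw [he_down a le_rfl, downEquiv_self, downEquiv_self]; rfl
  have he₁ : ∀ y, e (a + 1) y = e₁ y := fun y => by
    rw [he_up (a + 1) le_rfl, upEquiv_self, upEquiv_self]; rfl
  refine ⟨e, fun r x => ?_, fun r y => ?_⟩
  · rcases lt_trichotomy r a with hr | rfl | hr
    · exact map_f_of_map_v e (hv_low r hr) (hGv r hr).2 x
    · rw [he₀, he₁, hf]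
    · exact hf_high r hr x
  · rcases lt_trichotomy r a with hr | rfl | hr
    · exact hv_low r hr y
    · rw [he₀, he₁, hv]
    · exact map_v_of_map_f e (hf_high r hr) (hGf r hr).2 y

end GaugeData

section StandardGauges

variable {k : Type} [Field k] [Fact p.Prime] [CharP k p]

theorem stdFreeGaugeWitt_f_apply (d r : ℤ) (x : WittVector p k) :
    (stdFreeGaugeWitt p k d).f r x = if d ≤ r then x else p * x := by
  simp only [stdFreeGaugeWitt]
  split_ifs <;> rfl

theorem stdFreeGaugeWitt_v_apply (d r : ℤ) (x : WittVector p k) :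
    (stdFreeGaugeWitt p k d).v r x = if r + 1 ≤ d then x else p * x := by
  simp only [stdFreeGaugeWitt]
  split_ifs <;> rfl

theorem stdFreeGaugeWitt_concentratedIn {a b d : ℤ} (had : a ≤ d) (hdb : d ≤ b) :
    (stdFreeGaugeWitt p k d).ConcentratedIn a b := by
  refine ⟨fun r hr => ?_, fun r hr => ?_⟩
  · rw [show (stdFreeGaugeWitt p k d).v r = LinearMap.id from if_pos (by omega)]
    exact Function.bijective_id
  · rw [show (stdFreeGaugeWitt p k d).f r = LinearMap.id from if_pos (by omega)]
    exact Function.bijective_id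

end StandardGauges

theorem gaugeDirectSum_concentratedIn {ι : Type} [Fintype ι] {G : ι → GaugeData R p} {a b : ℤ}
    (hG : ∀ i, (G i).ConcentratedIn a b) : (gaugeDirectSum G).ConcentratedIn a b :=
  ⟨fun r hr => Function.Bijective.piMap fun i => (hG i).1 r hr,
    fun r hr => Function.Bijective.piMap fun i => (hG i).2 r hr⟩

theorem gauge_concentrated_length_one_is_free_general (p : ℕ) [hp : Fact p.Prime] (k : Type)
    [Field k] [CharP k p] [PerfectRing k p] (G : GaugeData (WittVector p k) p)
    (hfree : ∀ r : ℤ, Module.Finite (WittVector p k) (G.M r) ∧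
      Module.Free (WittVector p k) (G.M r))
    (a : ℤ) (hconc : G.ConcentratedIn a (a + 1)) : G.IsFreeWitt := by
  have := (hfree a).2
  have := (hfree (a + 1)).1
  have := (hfree (a + 1)).2
  obtain ⟨n, E₀, E₁, s, hf, hv⟩ := (G.f a).exists_diagonal_equivs_of_comp_eq_smul
    (WittVector.irreducible p) (G.v a) (G.fv a) (G.vf a)
  let d : Fin n → ℤ := fun i => if s i then a else a + 1
  have hd : ∀ i, a ≤ d i ∧ d i ≤ a + 1 := fun i => by simp only [d]; split <;> omega
  refine ⟨n, d, GaugeData.isoTo_of_concentratedIn hconc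
    (gaugeDirectSum_concentratedIn fun i => stdFreeGaugeWitt_concentratedIn (hd i).1 (hd i).2)
    E₀ E₁ (fun x => funext fun i => ?_) (fun y => funext fun i => ?_)⟩
  · show E₁ (G.f a x) i = (stdFreeGaugeWitt p k (d i)).f a (E₀ x i)
    rw [hf, stdFreeGaugeWitt_f_apply]
    by_cases hs : s i <;> simp [d, hs]
  · show E₀ (G.v a y) i = (stdFreeGaugeWitt p k (d i)).v a (E₁ y i)
    rw [hv, stdFreeGaugeWitt_v_apply]
    by_cases hs : s i <;> simp [d, hs]

/-- A gauge of finite type over `W(k)` with finitely generated free components which is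
concentrated in an interval `[a, a+1]` of length one is a free `W`-gauge. -/
theorem gauge_concentrated_length_one_is_free (p : ℕ) [hp : Fact p.Prime] (k : Type)
    [Field k] [CharP k p] [PerfectRing k p] (G : GaugeData (WittVector p k) p)
    (hft : G.IsFiniteType)
    (hfree : ∀ r : ℤ, Module.Finite (WittVector p k) (G.M r) ∧
      Module.Free (WittVector p k) (G.M r))
    (a : ℤ) (hconc : G.ConcentratedIn a (a + 1)) : G.IsFreeWitt :=
  gauge_concentrated_length_one_is_free_general p (hp := hp) k G hfree a hconc
end

section
/- Let A be a commutative noetherian ring of characteristic p, where p is a prime, and let φ : A → A be the Frobenius endomorphism a ↦ a^p. Then the subring A_per = ⋂_{n ≥ 0} φ^n(A) (the intersection of the images of all iterates of φ) is a perfect ring: every element of A_per is the p-th power of an element of A_per, and any element a of A_per with a^p = 0 satisfies a = 0; equivalently, the restriction of φ to A_per is a bijection of A_per onto itself. -/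
/-!
In a noetherian ring the nilradical is nilpotent, so some `p ^ N` kills every nilpotent element.
Hence `u ^ p ^ (N + 1) = v ^ p ^ (N + 1)` forces `u ^ p ^ N = v ^ p ^ N`, because `u - v` is
nilpotent and `(u - v) ^ p ^ N = u ^ p ^ N - v ^ p ^ N`. Writing elements of `⋂ₙ φⁿ(A)` as
`p ^ N`-th powers, this gives injectivity of `φ` there; and if `x = aₙ ^ p ^ n` for all `n`, the
element `a_{N+1} ^ p ^ N` is a `p`-th root of `x` which does not depend on the choice of the `aₙ`
and therefore again lies in `⋂ₙ φⁿ(A)`.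
-/

open Set

def perfectPart (M : Type*) [Monoid M] (p : ℕ) : Set M :=
  ⋂ n : ℕ, range ((fun a : M => a ^ p)^[n])

section Monoid

variable {M : Type*} [Monoid M] {p : ℕ}

theorem mem_perfectPart {x : M} : x ∈ perfectPart M p ↔ ∀ n : ℕ, ∃ a : M, a ^ p ^ n = x := by
  simp only [perfectPart, mem_iInter, mem_range, pow_iterate]

theorem mapsTo_pow_perfectPart : MapsTo (· ^ p) (perfectPart M p) (perfectPart M p) := by
  intro x hx
  rw [mem_perfectPart] at hx ⊢
  intro n
  obtain ⟨a, rfl⟩ := hx n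
  exact ⟨a ^ p, pow_right_comm a p (p ^ n)⟩

theorem zero_mem_perfectPart {M₀ : Type*} [MonoidWithZero M₀] (hp : p ≠ 0) :
    (0 : M₀) ∈ perfectPart M₀ p :=
  mem_perfectPart.mpr fun n => ⟨0, zero_pow (pow_ne_zero n hp)⟩

end Monoid

theorem IsNoetherianRing.exists_pow_eq_zero_of_isNilpotent (A : Type*) [CommRing A]
    [IsNoetherianRing A] : ∃ k : ℕ, ∀ a : A, IsNilpotent a → a ^ k = 0 := by
  obtain ⟨k, hk⟩ := IsNoetherianRing.isNilpotent_nilradical A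
  refine ⟨k, fun a ha => ?_⟩
  have : a ^ k ∈ nilradical A ^ k := Ideal.pow_mem_pow (mem_nilradical.mpr ha) k
  rwa [hk, Submodule.zero_eq_bot, Ideal.mem_bot] at this

theorem IsNoetherianRing.exists_pow_pow_eq_zero_of_isNilpotent (A : Type*) [CommRing A]
    [IsNoetherianRing A] {p : ℕ} (hp : 1 < p) :
    ∃ N : ℕ, ∀ a : A, IsNilpotent a → a ^ p ^ N = 0 := by
  obtain ⟨k, hk⟩ := exists_pow_eq_zero_of_isNilpotent A
  exact ⟨k, fun a ha => pow_eq_zero_of_le (Nat.lt_pow_self hp).le (hk a ha)⟩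

section ExpChar

variable {A : Type*} [CommRing A] {p : ℕ} [ExpChar A p] {N : ℕ}

theorem pow_expChar_pow_eq_of_pow_succ_eq (hN : ∀ a : A, IsNilpotent a → a ^ p ^ N = 0)
    {u v : A} (h : u ^ p ^ (N + 1) = v ^ p ^ (N + 1)) : u ^ p ^ N = v ^ p ^ N := by
  have hnil : IsNilpotent (u - v) := ⟨p ^ (N + 1), by rw [sub_pow_expChar_pow, h, sub_self]⟩
  rw [← sub_eq_zero, ← sub_pow_expChar_pow]
  exact hN _ hnil

theorem injOn_pow_perfectPart (hN : ∀ a : A, IsNilpotent a → a ^ p ^ N = 0) :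
    InjOn (· ^ p) (perfectPart A p) := by
  intro x hx y hy hxy
  obtain ⟨u, rfl⟩ := mem_perfectPart.mp hx N
  obtain ⟨v, rfl⟩ := mem_perfectPart.mp hy N
  refine pow_expChar_pow_eq_of_pow_succ_eq hN ?_
  simpa only [pow_succ, pow_mul] using hxy

theorem surjOn_pow_perfectPart (hN : ∀ a : A, IsNilpotent a → a ^ p ^ N = 0) :
    SurjOn (· ^ p) (perfectPart A p) (perfectPart A p) := by
  intro x hx
  choose a ha using mem_perfectPart.mp hx
  refine ⟨a (N + 1) ^ p ^ N, mem_perfectPart.mpr fun n => ⟨a (n + N + 1) ^ p ^ N, ?_⟩, ?_⟩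
  · have hroots : (a (n + N + 1) ^ p ^ n) ^ p ^ (N + 1) = a (N + 1) ^ p ^ (N + 1) := by
      rw [← pow_mul, ← pow_add, ← add_assoc, ha, ha]
    rw [pow_right_comm, pow_expChar_pow_eq_of_pow_succ_eq hN hroots]
  · simp only [← pow_mul, ← pow_succ, ha]

theorem bijOn_pow_perfectPart (hN : ∀ a : A, IsNilpotent a → a ^ p ^ N = 0) :
    BijOn (· ^ p) (perfectPart A p) (perfectPart A p) :=
  ⟨mapsTo_pow_perfectPart, injOn_pow_perfectPart hN, surjOn_pow_perfectPart hN⟩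

end ExpChar

/-- For a commutative noetherian ring `A` of characteristic `p`, the subring
`A_per = ⋂ₙ φⁿ(A)` (where `φ : a ↦ a^p` is the Frobenius) is perfect: every element of
`A_per` is a `p`-th power of an element of `A_per`, any `a ∈ A_per` with `a^p = 0` is zero,
and the Frobenius restricts to a bijection of `A_per` onto itself. -/
theorem perfection_subring_is_perfect (p : ℕ) (hp : p.Prime) (A : Type*)
    [CommRing A] [IsNoetherianRing A] [CharP A p] :
    (∀ x ∈ ⋂ n : ℕ, Set.range ((fun a : A => a ^ p)^[n]),
        ∃ y ∈ ⋂ n : ℕ, Set.range ((fun a : A => a ^ p)^[n]), y ^ p = x) ∧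
      (∀ a ∈ ⋂ n : ℕ, Set.range ((fun a : A => a ^ p)^[n]), a ^ p = 0 → a = 0) ∧
      Set.BijOn (fun a : A => a ^ p)
        (⋂ n : ℕ, Set.range ((fun a : A => a ^ p)^[n]))
        (⋂ n : ℕ, Set.range ((fun a : A => a ^ p)^[n])) := by
  have : ExpChar A p := ExpChar.prime hp
  obtain ⟨N, hN⟩ := IsNoetherianRing.exists_pow_pow_eq_zero_of_isNilpotent A hp.one_lt
  have hbij : BijOn (· ^ p) (perfectPart A p) (perfectPart A p) := bijOn_pow_perfectPart hN
  refine ⟨hbij.surjOn, fun a ha ha0 => ?_, hbij⟩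
  exact hbij.injOn ha (zero_mem_perfectPart hp.ne_zero) (ha0.trans (zero_pow hp.ne_zero).symm)
end

section
/- Let k be a perfect field of characteristic p > 0, W = W(k), and σ : W → W the Witt-vector Frobenius. The assignment sending a finite-type φ-gauge (M^{−1}, M^0, f, v, φ) concentrated in [−1,0] to the Dieudonné module (M^{−1}, F, V) with F = φ∘f and V = v∘φ^{−1} defines an equivalence of categories from the category of finite-type φ-gauges over W concentrated in [−1,0] to the category of Dieudonné modules of finite type over k: it is fully faithful (a W-linear map h : M^{−1} → N^{−1} commutes with F and V if and only if it arises from a unique morphism of φ-gauges) and essentially surjective (every Dieudonné module of finite type over k is isomorphic to one arising this way). -/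
/-- A finite-type φ-gauge over `W(k)` concentrated in `[-1, 0]`: finitely generated
`W(k)`-modules `M⁻¹`, `M⁰` with `f : M⁻¹ → M⁰`, `v : M⁰ → M⁻¹` satisfying
`f∘v = v∘f = p·id`, and a bijective additive Frobenius-semilinear map `φ : M⁰ → M⁻¹`. -/
structure PhiGaugeInterval (p : ℕ) [Fact p.Prime] (k : Type) [Field k] [CharP k p]
    [PerfectRing k p] where
  Mneg : Type
  Mzero : Type
  [acgN : AddCommGroup Mneg]
  [modN : Module (WittVector p k) Mneg]
  [acgZ : AddCommGroup Mzero]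
  [modZ : Module (WittVector p k) Mzero]
  [finN : Module.Finite (WittVector p k) Mneg]
  [finZ : Module.Finite (WittVector p k) Mzero]
  f : Mneg →ₗ[WittVector p k] Mzero
  v : Mzero →ₗ[WittVector p k] Mneg
  fv : ∀ x, f (v x) = (p : WittVector p k) • x
  vf : ∀ x, v (f x) = (p : WittVector p k) • x
  phi : Mzero ≃+ Mneg
  phi_semi : ∀ (c : WittVector p k) (x : Mzero),
    phi (c • x) = (WittVector.frobeniusEquiv p k c) • phi x

attribute [instance] PhiGaugeInterval.acgN PhiGaugeInterval.modN PhiGaugeInterval.acgZ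
  PhiGaugeInterval.modZ PhiGaugeInterval.finN PhiGaugeInterval.finZ

/-- A Dieudonné module of finite type over a perfect field `k`: a finitely generated
`W(k)`-module with a Frobenius-semilinear `F` and Verschiebung-semilinear `V` such that
`F∘V = V∘F = p·id`. -/
structure DieudonneModule (p : ℕ) [Fact p.Prime] (k : Type) [Field k] [CharP k p]
    [PerfectRing k p] where
  N : Type
  [acg : AddCommGroup N]
  [mod : Module (WittVector p k) N]
  [fin : Module.Finite (WittVector p k) N]
  F : N → N
  V : N → N
  F_add : ∀ x y, F (x + y) = F x + F y
  V_add : ∀ x y, V (x + y) = V x + V y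
  FV : ∀ x, F (V x) = (p : WittVector p k) • x
  VF : ∀ x, V (F x) = (p : WittVector p k) • x
  F_semi : ∀ (c : WittVector p k) x, F (c • x) = (WittVector.frobeniusEquiv p k c) • F x
  V_semi : ∀ (c : WittVector p k) x, V ((WittVector.frobeniusEquiv p k c) • x) = c • V x

attribute [instance] DieudonneModule.acg DieudonneModule.mod DieudonneModule.fin

/-!
A morphism of φ-gauges is determined by its degree `-1` part, since `φ` is bijective:
necessarily `h⁰ = φ⁻¹ ∘ h⁻¹ ∘ φ`, and this map is a morphism exactly when `h⁻¹` commutes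
with `F = φ ∘ f` and `V = v ∘ φ⁻¹`. Conversely a Dieudonné module `(N, F, V)` is the image
of the gauge with `M⁻¹ = N`, `M⁰ = N` with scalars acting through `σ`, `φ = id`, `f = F`
and `v = V`: the twist makes `F` and `V` linear.
-/

/-- `M` with `c` acting as `σ c`. -/
def ScalarTwist {R : Type*} [Ring R] (_σ : R ≃+* R) (M : Type*) : Type _ := M

namespace ScalarTwist

variable {R : Type*} [Ring R] (σ : R ≃+* R) (M : Type*) [AddCommGroup M] [Module R M]

instance : AddCommGroup (ScalarTwist σ M) := ‹AddCommGroup M›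

instance : Module R (ScalarTwist σ M) := Module.compHom M σ.toRingHom

def equiv : M ≃+ ScalarTwist σ M := AddEquiv.refl M

variable {σ M}

theorem smul_equiv (c : R) (x : M) : c • equiv σ M x = equiv σ M (σ c • x) := rfl

instance [Module.Finite R M] : Module.Finite R (ScalarTwist σ M) :=
  Module.Finite.of_surjective (σ := σ.symm.toRingHom)
    { toFun := equiv σ M
      map_add' := map_add (equiv σ M)
      map_smul' := fun c x => by simp [smul_equiv] }
    (equiv σ M).surjective

end ScalarTwist

namespace PhiGaugeInterval

variable {p : ℕ} [Fact p.Prime] {k : Type} [Field k] [CharP k p] [PerfectRing k p]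

theorem phi_symm_semi (X : PhiGaugeInterval p k) (c : WittVector p k) (y : X.Mneg) :
    X.phi.symm (WittVector.frobeniusEquiv p k c • y) = c • X.phi.symm y :=
  X.phi.injective <| by rw [X.phi_semi, X.phi.apply_symm_apply, X.phi.apply_symm_apply]

noncomputable def frob (X : PhiGaugeInterval p k) (x : X.Mneg) : X.Mneg := X.phi (X.f x)

noncomputable def ver (X : PhiGaugeInterval p k) (x : X.Mneg) : X.Mneg := X.v (X.phi.symm x)

variable {X Y : PhiGaugeInterval p k}

def IsHom (h1 : X.Mneg →ₗ[WittVector p k] Y.Mneg) (h0 : X.Mzero →ₗ[WittVector p k] Y.Mzero) :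
    Prop :=
  (∀ x, h0 (X.f x) = Y.f (h1 x)) ∧ (∀ x, h1 (X.v x) = Y.v (h0 x)) ∧
    ∀ x, h1 (X.phi x) = Y.phi (h0 x)

noncomputable def phiConj (h1 : X.Mneg →ₗ[WittVector p k] Y.Mneg) :
    X.Mzero →ₗ[WittVector p k] Y.Mzero where
  toFun x := Y.phi.symm (h1 (X.phi x))
  map_add' a b := by simp
  map_smul' c x := by
    simp only [RingHom.id_apply, X.phi_semi, map_smul, Y.phi_symm_semi]

@[simp]
theorem phiConj_apply (h1 : X.Mneg →ₗ[WittVector p k] Y.Mneg) (x : X.Mzero) :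
    phiConj h1 x = Y.phi.symm (h1 (X.phi x)) :=
  rfl

theorem phi_phiConj (h1 : X.Mneg →ₗ[WittVector p k] Y.Mneg) (x : X.Mzero) :
    Y.phi (phiConj h1 x) = h1 (X.phi x) :=
  Y.phi.apply_symm_apply _

theorem IsHom.eq_phiConj {h1 : X.Mneg →ₗ[WittVector p k] Y.Mneg}
    {h0 : X.Mzero →ₗ[WittVector p k] Y.Mzero} (hh : IsHom h1 h0) : h0 = phiConj h1 :=
  LinearMap.ext fun x => Y.phi.injective <| by rw [phi_phiConj, hh.2.2]

theorem IsHom.frob_comm {h1 : X.Mneg →ₗ[WittVector p k] Y.Mneg}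
    {h0 : X.Mzero →ₗ[WittVector p k] Y.Mzero} (hh : IsHom h1 h0) (x : X.Mneg) :
    h1 (X.frob x) = Y.frob (h1 x) := by
  rw [frob, frob, hh.2.2, hh.1]

theorem IsHom.ver_comm {h1 : X.Mneg →ₗ[WittVector p k] Y.Mneg}
    {h0 : X.Mzero →ₗ[WittVector p k] Y.Mzero} (hh : IsHom h1 h0) (x : X.Mneg) :
    h1 (X.ver x) = Y.ver (h1 x) := by
  simp [ver, hh.2.1, hh.eq_phiConj]

theorem isHom_phiConj {h1 : X.Mneg →ₗ[WittVector p k] Y.Mneg}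
    (hF : ∀ x, h1 (X.frob x) = Y.frob (h1 x)) (hV : ∀ x, h1 (X.ver x) = Y.ver (h1 x)) :
    IsHom h1 (phiConj h1) := by
  refine ⟨fun x => Y.phi.injective ?_, fun x => ?_, fun x => (phi_phiConj h1 x).symm⟩
  · rw [phi_phiConj]
    exact hF x
  · simpa [ver] using hV (X.phi x)

theorem existsUnique_isHom_iff (h1 : X.Mneg →ₗ[WittVector p k] Y.Mneg) :
    (∃! h0, IsHom h1 h0) ↔
      (∀ x, h1 (X.frob x) = Y.frob (h1 x)) ∧ ∀ x, h1 (X.ver x) = Y.ver (h1 x) := by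
  refine ⟨fun ⟨_, hh, _⟩ => ⟨hh.frob_comm, hh.ver_comm⟩, fun ⟨hF, hV⟩ => ?_⟩
  exact ⟨phiConj h1, isHom_phiConj hF hV, fun _ hh => hh.eq_phiConj⟩

end PhiGaugeInterval

namespace DieudonneModule

variable {p : ℕ} [Fact p.Prime] {k : Type} [Field k] [CharP k p] [PerfectRing k p]

noncomputable def toPhiGauge (D : DieudonneModule p k) : PhiGaugeInterval p k where
  Mneg := D.N
  Mzero := ScalarTwist (WittVector.frobeniusEquiv p k) D.N
  f :=
    { toFun := D.F
      map_add' := D.F_add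
      map_smul' := D.F_semi }
  v :=
    { toFun := D.V
      map_add' := D.V_add
      map_smul' := D.V_semi }
  fv x := by
    obtain ⟨y, rfl⟩ := (ScalarTwist.equiv _ D.N).surjective x
    rw [ScalarTwist.smul_equiv, map_natCast]
    exact D.FV y
  vf := D.VF
  phi := (ScalarTwist.equiv _ D.N).symm
  phi_semi _ _ := rfl

theorem frob_toPhiGauge (D : DieudonneModule p k) : D.toPhiGauge.frob = D.F := rfl

theorem ver_toPhiGauge (D : DieudonneModule p k) : D.toPhiGauge.ver = D.V := rfl

end DieudonneModule

/-- Sending a finite-type φ-gauge `(M⁻¹, M⁰, f, v, φ)` concentrated in `[-1,0]` to the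
Dieudonné module `(M⁻¹, F, V)` with `F = φ∘f` and `V = v∘φ⁻¹` is an equivalence of
categories: it is fully faithful (a `W`-linear map `h : M⁻¹ → N⁻¹` commutes with `F` and
`V` iff it extends to a unique morphism of φ-gauges) and essentially surjective. -/
theorem phiGauge_dieudonne_equivalence (p : ℕ) [hp : Fact p.Prime] (k : Type) [Field k]
    [CharP k p] [PerfectRing k p] :
    (∀ (X Y : PhiGaugeInterval p k) (h1 : X.Mneg →ₗ[WittVector p k] Y.Mneg),
      ((∀ x : X.Mneg, h1 (X.phi (X.f x)) = Y.phi (Y.f (h1 x))) ∧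
        (∀ x : X.Mneg, h1 (X.v (X.phi.symm x)) = Y.v (Y.phi.symm (h1 x)))) ↔
      (∃! h0 : X.Mzero →ₗ[WittVector p k] Y.Mzero,
        (∀ x : X.Mneg, h0 (X.f x) = Y.f (h1 x)) ∧
        (∀ x : X.Mzero, h1 (X.v x) = Y.v (h0 x)) ∧
        (∀ x : X.Mzero, h1 (X.phi x) = Y.phi (h0 x)))) ∧
    (∀ Dd : DieudonneModule p k, ∃ (X : PhiGaugeInterval p k)
        (e : Dd.N ≃ₗ[WittVector p k] X.Mneg),
      (∀ x : Dd.N, e (Dd.F x) = X.phi (X.f (e x))) ∧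
      (∀ x : Dd.N, e (Dd.V x) = X.v (X.phi.symm (e x)))) := by
  refine ⟨fun X Y h1 => (PhiGaugeInterval.existsUnique_isHom_iff h1).symm, fun D => ?_⟩
  exact ⟨D.toPhiGauge, LinearEquiv.refl _ _, fun x => congrFun D.frob_toPhiGauge.symm x,
    fun x => congrFun D.ver_toPhiGauge.symm x⟩
end
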